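/- arXiv:1704.08144 — 6 statements merged into one kernel-verified Lean document; each statement's English description precedes it below -/
import Mathlib

section
/- For all real x with 0 ≤ x ≤ π, one has sin(x)/x ≤ exp(-x²/6) (interpreting sin(x)/x as 1 at x = 0). -/
/-!
For `x ≥ 0`, integrating `cos x ≤ 1` over and over shows that the Taylor partial sums of `sin` and
`cos` alternately over- and underestimate them; integrating `exp (-t) ≥ 0` does the same for
`exp (-t)`. Hence `sin x ≤ x - x³/3! + ⋯ + x⁹/9!` and `exp (-t) ≥ 1 - t + ⋯ - t⁵/5!`, and with
`t = x² / 6` the claim reduces to a polynomial inequality in `x²`, valid on `[0, 10] ∋ π²`.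
-/

open Real Finset Nat

noncomputable def sinTaylor (n : ℕ) (x : ℝ) : ℝ :=
  ∑ k ∈ range n, (-1) ^ k * (x ^ (2 * k + 1) / (2 * k + 1)!)

noncomputable def cosTaylor (n : ℕ) (x : ℝ) : ℝ :=
  ∑ k ∈ range n, (-1) ^ k * (x ^ (2 * k) / (2 * k)!)

noncomputable def expNegTaylor (n : ℕ) (t : ℝ) : ℝ :=
  ∑ k ∈ range n, (-t) ^ k / k !

lemma hasDerivAt_pow_succ_div_factorial (k : ℕ) (x : ℝ) :
    HasDerivAt (fun y : ℝ => y ^ (k + 1) / (k + 1)!) (x ^ k / k !) x := by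
  refine ((hasDerivAt_pow (k + 1) x).div_const ((k + 1)! : ℝ)).congr_deriv ?_
  rw [Nat.factorial_succ]
  push_cast
  field_simp

lemma hasDerivAt_sinTaylor (n : ℕ) (x : ℝ) : HasDerivAt (sinTaylor n) (cosTaylor n x) x :=
  HasDerivAt.fun_sum fun k _ =>
    (hasDerivAt_pow_succ_div_factorial (2 * k) x).const_mul ((-1 : ℝ) ^ k)

lemma hasDerivAt_cosTaylor (n : ℕ) (x : ℝ) :
    HasDerivAt (cosTaylor (n + 1)) (-sinTaylor n x) x := by
  have h : cosTaylor (n + 1) = fun y : ℝ =>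
      ∑ k ∈ range n, (-1 : ℝ) ^ (k + 1) * (y ^ (2 * k + 1 + 1) / (2 * k + 1 + 1)!) + 1 := by
    ext y; simp [cosTaylor, sum_range_succ', mul_add]
  rw [h]
  refine ((HasDerivAt.fun_sum fun k _ =>
    (hasDerivAt_pow_succ_div_factorial (2 * k + 1) x).const_mul ((-1 : ℝ) ^ (k + 1))).add_const
      1).congr_deriv ?_
  simp [sinTaylor, pow_succ, ← sum_neg_distrib]

lemma hasDerivAt_expNegTaylor (n : ℕ) (t : ℝ) :
    HasDerivAt (expNegTaylor (n + 1)) (-expNegTaylor n t) t := by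
  have h : expNegTaylor (n + 1) = fun s : ℝ =>
      -∑ k ∈ range n, (-s) ^ (k + 1) / (k + 1)! * (-1) + 1 := by
    ext s; simp [expNegTaylor, sum_range_succ']
  rw [h]
  refine ((HasDerivAt.fun_sum fun k _ =>
    ((hasDerivAt_pow_succ_div_factorial k (-t)).comp t (hasDerivAt_neg t)).mul_const
      (-1 : ℝ)).neg.add_const 1).congr_deriv ?_
  simp [expNegTaylor]

lemma nonneg_of_hasDerivAt_nonneg {f f' : ℝ → ℝ} (hf : ∀ x, HasDerivAt f (f' x) x)
    (hf' : ∀ x, 0 ≤ x → 0 ≤ f' x) (h0 : f 0 = 0) {x : ℝ} (hx : 0 ≤ x) : 0 ≤ f x := by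
  have hmono : MonotoneOn f (Set.Ici 0) :=
    monotoneOn_of_hasDerivWithinAt_nonneg (convex_Ici 0)
      (fun y _ => (hf y).continuousAt.continuousWithinAt) (fun y _ => (hf y).hasDerivWithinAt)
      (fun y hy => hf' y (interior_subset hy))
  simpa [h0] using hmono Set.self_mem_Ici hx hx

lemma sin_sub_sinTaylor_sign_of_cos {n : ℕ}
    (hcos : ∀ x, 0 ≤ x → 0 ≤ (-1) ^ n * (cos x - cosTaylor n x)) {x : ℝ} (hx : 0 ≤ x) :
    0 ≤ (-1) ^ n * (sin x - sinTaylor n x) :=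
  nonneg_of_hasDerivAt_nonneg
    (fun y => ((hasDerivAt_sin y).sub (hasDerivAt_sinTaylor n y)).const_mul _) hcos
    (by simp [sinTaylor]) hx

lemma cos_sub_cosTaylor_succ_sign_of_sin {n : ℕ}
    (hsin : ∀ x, 0 ≤ x → 0 ≤ (-1) ^ n * (sin x - sinTaylor n x)) {x : ℝ} (hx : 0 ≤ x) :
    0 ≤ (-1) ^ (n + 1) * (cos x - cosTaylor (n + 1) x) := by
  refine nonneg_of_hasDerivAt_nonneg
    (fun y => (((hasDerivAt_cos y).sub (hasDerivAt_cosTaylor n y)).const_mul _).congr_deriv ?_)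
    hsin (by simp [cosTaylor, sum_range_succ']) hx
  ring

lemma cos_sub_cosTaylor_sign (n : ℕ) {x : ℝ} (hx : 0 ≤ x) :
    0 ≤ (-1) ^ (n + 1) * (cos x - cosTaylor (n + 1) x) := by
  induction n generalizing x with
  | zero => simpa [cosTaylor] using cos_le_one x
  | succ n ih =>
    exact cos_sub_cosTaylor_succ_sign_of_sin
      (fun _ hy => sin_sub_sinTaylor_sign_of_cos (fun _ hz => ih hz) hy) hx

lemma sin_sub_sinTaylor_sign (n : ℕ) {x : ℝ} (hx : 0 ≤ x) :
    0 ≤ (-1) ^ (n + 1) * (sin x - sinTaylor (n + 1) x) :=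
  sin_sub_sinTaylor_sign_of_cos (fun _ hy => cos_sub_cosTaylor_sign n hy) hx

lemma exp_neg_sub_expNegTaylor_sign (n : ℕ) {t : ℝ} (ht : 0 ≤ t) :
    0 ≤ (-1) ^ n * (exp (-t) - expNegTaylor n t) := by
  induction n generalizing t with
  | zero => simpa [expNegTaylor] using (exp_pos (-t)).le
  | succ n ih =>
    refine nonneg_of_hasDerivAt_nonneg (fun s => ((((hasDerivAt_neg s).exp).sub
      (hasDerivAt_expNegTaylor n s)).const_mul _).congr_deriv ?_) (fun s hs => ih hs)
      (by simp [expNegTaylor, sum_range_succ']) ht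
    ring

lemma sin_le_sinTaylor_five {x : ℝ} (hx : 0 ≤ x) : sin x ≤ sinTaylor 5 x := by
  have := sin_sub_sinTaylor_sign 4 hx
  norm_num at this
  linarith

lemma expNegTaylor_six_le {t : ℝ} (ht : 0 ≤ t) : expNegTaylor 6 t ≤ exp (-t) := by
  have := exp_neg_sub_expNegTaylor_sign 6 ht
  norm_num at this
  linarith

/-- With `u = x ^ 2`, this polynomial times `x * u ^ 2` is
`x * expNegTaylor 6 (x ^ 2 / 6) - sinTaylor 5 x`. -/
lemma sinTaylor_five_gap_nonneg {u : ℝ} (hu : 0 ≤ u) (hu10 : u ≤ 10) :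
    0 ≤ 1 / 180 - 13 / 22680 * u + 1 / 34020 * u ^ 2 - 1 / 933120 * u ^ 3 := by
  nlinarith [mul_nonneg hu (sub_nonneg.2 hu10), mul_nonneg (mul_nonneg hu hu) (sub_nonneg.2 hu10)]

lemma sinTaylor_five_le {x : ℝ} (hx : 0 ≤ x) (hx2 : x ^ 2 ≤ 10) :
    sinTaylor 5 x ≤ x * expNegTaylor 6 (x ^ 2 / 6) := by
  have hgap := mul_nonneg (mul_nonneg hx (sq_nonneg (x ^ 2)))
    (sinTaylor_five_gap_nonneg (sq_nonneg x) hx2)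
  simp only [sinTaylor, expNegTaylor, sum_range_succ, sum_range_zero, Nat.factorial]
  push_cast
  linear_combination hgap

theorem sinc_le_exp (x : ℝ) (h0 : 0 ≤ x) (h1 : x ≤ Real.pi) :
    (if x = 0 then (1:ℝ) else Real.sin x / x) ≤ Real.exp (-x ^ 2 / 6) := by
  split_ifs with hx0
  · simp [hx0]
  have hx : 0 < x := h0.lt_of_ne' hx0
  have hx2 : x ^ 2 ≤ 10 := by nlinarith [pi_lt_d2]
  rw [div_le_iff₀' hx, neg_div]
  calc sin x ≤ sinTaylor 5 x := sin_le_sinTaylor_five h0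
    _ ≤ x * expNegTaylor 6 (x ^ 2 / 6) := sinTaylor_five_le h0 hx2
    _ ≤ x * exp (-(x ^ 2 / 6)) := by gcongr; exact expNegTaylor_six_le (by positivity)
end

section
/- For s ≥ 4, the integral ∫_{-∞}^{∞} |sin(πx)/(πx)|^s dx is strictly less than √(2/s). -/
/-!
On `|x| ≤ 1` every factor of Euler's product `sin (π x) = π x ∏ (1 - x² / k²)` lies in `[0, 1]`
and is at most `exp (-x² / k²)`, so `sinc (π x) ≤ exp (-π² x² / 6)` by `∑ 1 / k² = π² / 6`.
Hence `|sinc (π x)| ^ s` is dominated by the Gaussian `exp (-s π² x² / 6)`, of integral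
`√(6 / (π s))`, plus the tails `(π |x|) ^ (-s)` on `|x| > 1`, of total integral `2 π ^ (-s) / (s - 1)`.
For `s ≥ 4` the tails are at most `2 π⁻⁴ / √s`, and `√(6 / π) + 2 π⁻⁴ < √2`.
-/

open Real MeasureTheory Set Filter Topology

theorem sin_pi_mul_le_mul_exp_neg_sq {x : ℝ} (hx₀ : 0 ≤ x) (hx₁ : x ≤ 1) :
    sin (π * x) ≤ π * x * exp (-(π ^ 2 / 6) * x ^ 2) := by
  set S : ℕ → ℝ := fun n ↦ ∑ j ∈ Finset.range n, 1 / ((j : ℝ) + 1) ^ 2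
  have hS : Tendsto S atTop (𝓝 (π ^ 2 / 6)) := by
    simpa [S] using ((hasSum_nat_add_iff' 1).mpr hasSum_zeta_two).tendsto_sum_nat
  have hprod (n : ℕ) : π * x * ∏ j ∈ Finset.range n, (1 - x ^ 2 / ((j : ℝ) + 1) ^ 2) ≤
      π * x * exp (-S n * x ^ 2) := by
    refine mul_le_mul_of_nonneg_left ?_ (by positivity)
    rw [neg_mul, Finset.sum_mul, ← Finset.sum_neg_distrib, exp_sum]
    refine Finset.prod_le_prod (fun j _ ↦ ?_) (fun j _ ↦ ?_)
    · rw [sub_nonneg, div_le_one (by positivity)]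
      gcongr
      linarith [j.cast_nonneg (α := ℝ)]
    · rw [one_div_mul_eq_div]
      linarith [add_one_le_exp (-(x ^ 2 / ((j : ℝ) + 1) ^ 2))]
  exact le_of_tendsto_of_tendsto' (tendsto_euler_sin_prod x)
    ((hS.neg.mul_const _).rexp.const_mul _) hprod

theorem abs_sinc_pi_mul_le_exp_neg_sq {x : ℝ} (hx : |x| ≤ 1) :
    |sinc (π * x)| ≤ exp (-(π ^ 2 / 6) * x ^ 2) := by
  have hsym : sinc (π * x) = sinc (π * |x|) := by
    rcases abs_cases x with ⟨h, _⟩ | ⟨h, _⟩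
    · rw [h]
    · rw [h, mul_neg, sinc_neg]
  rw [hsym, ← sq_abs x]
  rcases (abs_nonneg x).eq_or_lt with h0 | hpos
  · simp [← h0]
  have hπx : 0 < π * |x| := by positivity
  have hsin : 0 ≤ sin (π * |x|) :=
    sin_nonneg_of_nonneg_of_le_pi hπx.le (mul_le_of_le_one_right pi_pos.le hx)
  rw [sinc_of_ne_zero hπx.ne', abs_of_nonneg (div_nonneg hsin hπx.le), div_le_iff₀' hπx]
  exact sin_pi_mul_le_mul_exp_neg_sq hpos.le hx

theorem abs_sinc_le_inv_abs {x : ℝ} (hx : x ≠ 0) : |sinc x| ≤ |x|⁻¹ := by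
  rw [sinc_of_ne_zero hx, abs_div, div_eq_mul_inv]
  exact mul_le_of_le_one_left (by positivity) (abs_sin_le_one x)

noncomputable def sincTail (s : ℝ) : ℝ → ℝ := (Ioi 1).indicator fun t ↦ (π * t) ^ (-s)

theorem sincTail_nonneg (s x : ℝ) : 0 ≤ sincTail s x :=
  indicator_nonneg (fun _ ht ↦ rpow_nonneg (mul_pos pi_pos (one_pos.trans ht)).le _) x

theorem sincTail_of_one_lt {s t : ℝ} (ht : 1 < t) : sincTail s t = (π * t) ^ (-s) :=
  indicator_of_mem (mem_Ioi.mpr ht) _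

theorem pi_mul_rpow_eqOn (s : ℝ) : EqOn (fun t ↦ π ^ s * t ^ s) (fun t ↦ (π * t) ^ s) (Ioi 0) :=
  fun _ ht ↦ (mul_rpow pi_pos.le (le_of_lt ht)).symm

theorem integrable_sincTail {s : ℝ} (hs : 1 < s) : Integrable (sincTail s) := by
  rw [sincTail, integrable_indicator_iff measurableSet_Ioi]
  exact IntegrableOn.congr_fun ((integrableOn_Ioi_rpow_of_lt (by linarith) one_pos).const_mul _)
    ((pi_mul_rpow_eqOn _).mono (Ioi_subset_Ioi zero_le_one)) measurableSet_Ioi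

theorem integral_sincTail {s : ℝ} (hs : 1 < s) : ∫ x, sincTail s x = π ^ (-s) / (s - 1) := by
  rw [sincTail, integral_indicator measurableSet_Ioi, ← setIntegral_congr_fun measurableSet_Ioi
    ((pi_mul_rpow_eqOn _).mono (Ioi_subset_Ioi zero_le_one)), integral_const_mul,
    integral_Ioi_rpow_of_lt (by linarith) one_pos, one_rpow, show -s + 1 = -(s - 1) by ring,
    neg_div_neg_eq, mul_one_div]

theorem sincTail_le_add_sincTail_neg {s x : ℝ} (hx : 1 < |x|) :
    (π * |x|) ^ (-s) ≤ sincTail s x + sincTail s (-x) := by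
  rcases abs_cases x with ⟨h, _⟩ | ⟨h, _⟩ <;> rw [h] at hx ⊢
  · linarith [sincTail_of_one_lt (s := s) hx, sincTail_nonneg s (-x)]
  · linarith [sincTail_of_one_lt (s := s) hx, sincTail_nonneg s x]

theorem abs_sinc_pi_mul_rpow_le {s : ℝ} (hs : 0 ≤ s) (x : ℝ) :
    |sinc (π * x)| ^ s ≤ exp (-(s * π ^ 2 / 6) * x ^ 2) + (sincTail s x + sincTail s (-x)) := by
  rcases le_or_gt |x| 1 with hx | hx
  · have hgauss := rpow_le_rpow (abs_nonneg _) (abs_sinc_pi_mul_le_exp_neg_sq hx) hs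
    rw [← exp_mul, show -(π ^ 2 / 6) * x ^ 2 * s = -(s * π ^ 2 / 6) * x ^ 2 by ring] at hgauss
    linarith [sincTail_nonneg s x, sincTail_nonneg s (-x)]
  · have hπx : 0 < π * |x| := by positivity
    have hinv : |sinc (π * x)| ≤ (π * |x|)⁻¹ := by
      simpa [abs_mul, abs_of_pos pi_pos] using
        abs_sinc_le_inv_abs (mul_ne_zero pi_ne_zero (abs_pos.mp (one_pos.trans hx)))
    have hpow : |sinc (π * x)| ^ s ≤ (π * |x|) ^ (-s) := by
      rw [rpow_neg hπx.le, ← inv_rpow hπx.le]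
      exact rpow_le_rpow (abs_nonneg _) hinv hs
    linarith [sincTail_le_add_sincTail_neg (s := s) hx, exp_pos (-(s * π ^ 2 / 6) * x ^ 2)]

theorem integral_abs_sinc_pi_mul_rpow_le {s : ℝ} (hs : 1 < s) :
    ∫ x, |sinc (π * x)| ^ s ≤ √(6 / (π * s)) + 2 * (π ^ (-s) / (s - 1)) := by
  have hG := integrable_exp_neg_mul_sq (b := s * π ^ 2 / 6) (by positivity)
  have hT := integrable_sincTail hs
  have hT₂ : Integrable fun x ↦ sincTail s x + sincTail s (-x) := hT.add hT.comp_neg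
  calc ∫ x, |sinc (π * x)| ^ s
      ≤ ∫ x, exp (-(s * π ^ 2 / 6) * x ^ 2) + (sincTail s x + sincTail s (-x)) :=
        integral_mono_of_nonneg (ae_of_all _ fun _ ↦ by positivity) (hG.add hT₂)
          (ae_of_all _ (abs_sinc_pi_mul_rpow_le (by linarith)))
    _ = √(6 / (π * s)) + 2 * (π ^ (-s) / (s - 1)) := by
        rw [integral_add hG hT₂, integral_add hT hT.comp_neg, integral_gaussian,
          integral_neg_eq_self, integral_sincTail hs, two_mul]
        congr 2
        field_simp

theorem sqrt_six_div_pi_add_two_div_pi_pow_four_lt_sqrt_two : √(6 / π) + 2 / π ^ 4 < √2 := by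
  have hπ : 3.14 < π := pi_gt_d2
  have h₁ : √(6 / π) < 1.3824 := by
    rw [sqrt_lt' (by norm_num), div_lt_iff₀ pi_pos]
    linarith
  have h₂ : 2 / π ^ 4 < 0.021 := by
    rw [div_lt_iff₀ (by positivity)]
    nlinarith [pow_le_pow_left₀ (by norm_num) hπ.le 4]
  have h₃ : 1.414 < √2 := by
    rw [lt_sqrt (by norm_num)]
    norm_num
  linarith

theorem sqrt_six_div_pi_mul_add_lt {s : ℝ} (hs : 4 ≤ s) :
    √(6 / (π * s)) + 2 * (π ^ (-s) / (s - 1)) < √(2 / s) := by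
  have hs₀ : 0 < √s := sqrt_pos.mpr (by linarith)
  have hpow : π ^ (-s) ≤ 1 / π ^ 4 := by
    calc π ^ (-s) ≤ π ^ (-4 : ℝ) :=
          rpow_le_rpow_of_exponent_le (by linarith [pi_gt_three]) (by linarith)
      _ = 1 / π ^ 4 := by rw [rpow_neg pi_pos.le, one_div]; norm_cast
  have hsqrt : √s ≤ s - 1 := by
    nlinarith [sq_sqrt (show 0 ≤ s by linarith), le_sqrt_of_sq_le (show 2 ^ 2 ≤ s by linarith)]
  have htail : π ^ (-s) / (s - 1) ≤ 1 / π ^ 4 / √s :=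
    div_le_div₀ (by positivity) hpow hs₀ hsqrt
  calc √(6 / (π * s)) + 2 * (π ^ (-s) / (s - 1))
      ≤ √(6 / π) / √s + 2 * (1 / π ^ 4 / √s) := by
        rw [← div_div, sqrt_div (by positivity)]
        gcongr
    _ = (√(6 / π) + 2 / π ^ 4) / √s := by ring
    _ < √2 / √s := by
        gcongr
        exact sqrt_six_div_pi_add_two_div_pi_pow_four_lt_sqrt_two
    _ = √(2 / s) := (sqrt_div zero_le_two s).symm

theorem ball_ineq_ge_four (s : ℝ) (hs : 4 ≤ s) :
    (∫ x : ℝ, (if x = 0 then (1:ℝ) else |Real.sin (Real.pi * x) / (Real.pi * x)|) ^ s)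
      < Real.sqrt (2 / s) := by
  have hintegrand : (fun x : ℝ ↦ (if x = 0 then (1:ℝ) else |sin (π * x) / (π * x)|) ^ s) =
      fun x ↦ |sinc (π * x)| ^ s := by
    funext x
    rcases eq_or_ne x 0 with rfl | hx
    · simp
    · rw [if_neg hx, sinc_of_ne_zero (mul_ne_zero pi_ne_zero hx)]
  rw [hintegrand]
  exact (integral_abs_sinc_pi_mul_rpow_le (by linarith)).trans_lt (sqrt_six_div_pi_mul_add_lt hs)
end

section
/- Let α > β - 1 > 0. Then ∫_0^π |sin t|^α / t^β dt ≤ (1/2)(6/α)^{(α-β+1)/2} Γ((α-β+1)/2). -/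
/-!
Euler's product `sin t = t ∏ (1 - t² / (k² π²))` has factors in `[0, 1]` when `0 ≤ t ≤ π`;
bounding each factor by `exp (-t² / (k² π²))` and using `∑ 1 / k² = π² / 6` gives
`sin t ≤ t exp (-t² / 6)`. Hence the integrand is at most `t ^ (α - β) exp (-α t² / 6)`, and
extending the integral of this majorant to `(0, ∞)` yields the Gamma-function value.
-/

open Real MeasureTheory Set Filter Topology

theorem Real.prod_one_sub_le_exp_neg_sum {ι : Type*} (s : Finset ι) (a : ι → ℝ)
    (ha : ∀ i ∈ s, a i ≤ 1) : ∏ i ∈ s, (1 - a i) ≤ exp (-∑ i ∈ s, a i) := by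
  rw [← Finset.sum_neg_distrib, exp_sum]
  refine Finset.prod_le_prod (fun i hi => sub_nonneg.2 (ha i hi)) fun i _ => ?_
  linarith [add_one_le_exp (-a i)]

theorem tendsto_sum_sq_div_succ_sq (x : ℝ) :
    Tendsto (fun n : ℕ => ∑ j ∈ Finset.range n, x ^ 2 / ((j : ℝ) + 1) ^ 2) atTop
      (𝓝 ((π * x) ^ 2 / 6)) := by
  have h := ((hasSum_nat_add_iff' 1).2 hasSum_zeta_two).mul_left (x ^ 2)
  convert h.tendsto_sum_nat using 2 with n
  · simp only [Nat.cast_add, Nat.cast_one, mul_one_div]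
  · simp only [Finset.range_one, Finset.sum_singleton, Nat.cast_zero]
    ring

theorem Real.sin_pi_mul_le {x : ℝ} (hx₀ : 0 ≤ x) (hx₁ : x ≤ 1) :
    sin (π * x) ≤ π * x * exp (-((π * x) ^ 2 / 6)) := by
  refine le_of_tendsto_of_tendsto' (tendsto_euler_sin_prod x)
    (((tendsto_sum_sq_div_succ_sq x).neg.rexp).const_mul (π * x)) fun n => ?_
  refine mul_le_mul_of_nonneg_left (prod_one_sub_le_exp_neg_sum _ _ fun j _ => ?_)
    (by positivity)
  rw [div_le_one (by positivity)]
  nlinarith [(Nat.cast_nonneg j : (0 : ℝ) ≤ j)]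

theorem Real.sin_le_mul_exp_neg_sq_div_six {t : ℝ} (ht₀ : 0 ≤ t) (htπ : t ≤ π) :
    sin t ≤ t * exp (-(t ^ 2 / 6)) := by
  have h := sin_pi_mul_le (div_nonneg ht₀ pi_pos.le) ((div_le_one pi_pos).2 htπ)
  rwa [mul_div_cancel₀ t pi_pos.ne'] at h

theorem abs_sin_rpow_div_rpow_le {α β t : ℝ} (hα : 0 ≤ α) (ht : t ∈ Ioc 0 π) :
    |sin t| ^ α / t ^ β ≤ t ^ (α - β) * exp (-(α / 6) * t ^ 2) := by
  obtain ⟨ht₀, htπ⟩ := ht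
  have hsin : 0 ≤ sin t := sin_nonneg_of_nonneg_of_le_pi ht₀.le htπ
  calc |sin t| ^ α / t ^ β ≤ (t * exp (-(t ^ 2 / 6))) ^ α / t ^ β := by
        rw [abs_of_nonneg hsin]
        gcongr
        exact sin_le_mul_exp_neg_sq_div_six ht₀.le htπ
    _ = t ^ (α - β) * exp (-(α / 6) * t ^ 2) := by
        rw [mul_rpow ht₀.le (exp_pos _).le, ← exp_mul, rpow_sub ht₀, div_mul_eq_mul_div]
        ring_nf

theorem integral_rpow_mul_exp_neg_mul_sq {b q : ℝ} (hb : 0 < b) (hq : -1 < q) :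
    ∫ x in Ioi (0 : ℝ), x ^ q * exp (-b * x ^ 2) =
      1 / 2 * b⁻¹ ^ ((q + 1) / 2) * Gamma ((q + 1) / 2) := by
  have h := integral_rpow_mul_exp_neg_mul_rpow two_pos hq hb
  simp_rw [rpow_two] at h
  rw [h, neg_div, rpow_neg hb.le, inv_rpow hb.le]
  ring

theorem moment_integral_upper_bound (α β : ℝ) (hβ : 1 < β) (hαβ : β - 1 < α) :
    (∫ t in Ioc (0:ℝ) Real.pi, |Real.sin t| ^ α / t ^ β)
      ≤ (1 / 2) * (6 / α) ^ ((α - β + 1) / 2) * Real.Gamma ((α - β + 1) / 2) := by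
  have hα : 0 < α := by linarith
  have hb : 0 < α / 6 := by positivity
  have hq : -1 < α - β := by linarith
  set g : ℝ → ℝ := fun t => t ^ (α - β) * exp (-(α / 6) * t ^ 2)
  have hg : IntegrableOn g (Ioi 0) := integrableOn_rpow_mul_exp_neg_mul_sq hb hq
  calc (∫ t in Ioc 0 π, |sin t| ^ α / t ^ β)
      ≤ ∫ t in Ioc 0 π, g t := by
        refine integral_mono_of_nonneg ?_ (hg.mono_set Ioc_subset_Ioi_self) ?_
        all_goals filter_upwards [ae_restrict_mem measurableSet_Ioc] with t ht
        · exact div_nonneg (rpow_nonneg (abs_nonneg _) _) (rpow_nonneg ht.1.le _)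
        · exact abs_sin_rpow_div_rpow_le hα.le ht
    _ ≤ ∫ t in Ioi 0, g t := by
        refine setIntegral_mono_set hg ?_ Ioc_subset_Ioi_self.eventuallyLE
        filter_upwards [ae_restrict_mem measurableSet_Ioi] with t ht
        exact mul_nonneg (rpow_nonneg ht.le _) (exp_pos _).le
    _ = _ := by rw [integral_rpow_mul_exp_neg_mul_sq hb hq, inv_div]
end

section
/- For α > 2, with I(α,α) = ∫_{ℝ} |sin t|^α / |t|^α dt, one has √(6/α)·√α·Γ(α+1)√π/Γ(α+3/2) ≤ I(α,α) ≤ √(6/α)·√π·(1 + 1/(α-1)). -/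
/-!
For `t > 0`, Taylor bounds squeeze `sin t / t` between `1 - t ^ 2 / 6` and, on `(0, 13/5]`,
`exp (-t ^ 2 / 6)`; the integrand is even, so it suffices to integrate over `(0, ∞)`.
For the lower bound, `(1 - t ^ 2 / 6) ^ α` on `[0, √6]` integrates, after `t = √6 u` and
`x = u ^ 2`, to the Beta integral `√6 B(1/2, α + 1) / 2`. For the upper bound, the Gaussian
`exp (-α t ^ 2 / 6)` dominates on `(0, 13/5]` and `t ^ (-α)` beyond; the tail
`(13/5) ^ (1 - α) / (α - 1)` is at most `√(6π/α) / (2 (α - 1))` by Bernoulli's inequality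
`(13/5) ^ (α - 1) ≥ 1 + 8 (α - 1) / 5`.
-/

open Real MeasureTheory Set

lemma le_of_hasDerivAt_le_of_nonneg {f g f' g' : ℝ → ℝ} (hf : ∀ x, HasDerivAt f (f' x) x)
    (hg : ∀ x, HasDerivAt g (g' x) x) (h₀ : f 0 ≤ g 0) (h' : ∀ x, 0 ≤ x → f' x ≤ g' x)
    {x : ℝ} (hx : 0 ≤ x) : f x ≤ g x :=
  image_le_of_deriv_right_le_deriv_boundary (fun y _ ↦ (hf y).continuousAt.continuousWithinAt)
    (fun y _ ↦ (hf y).hasDerivWithinAt) h₀ (fun y _ ↦ (hg y).continuousAt.continuousWithinAt)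
    (fun y _ ↦ (hg y).hasDerivWithinAt) (fun y hy ↦ h' y hy.1) ⟨hx, le_rfl⟩

namespace Real

lemma cos_le_one_sub_sq_div_two_add_pow_four_div {x : ℝ} (hx : 0 ≤ x) :
    cos x ≤ 1 - x ^ 2 / 2 + x ^ 4 / 24 :=
  le_of_hasDerivAt_le_of_nonneg hasDerivAt_cos
    (fun y ↦ (((hasDerivAt_const y 1).sub ((hasDerivAt_pow 2 y).div_const 2)).add
      ((hasDerivAt_pow 4 y).div_const 24))) (by simp)
    (fun y hy ↦ by norm_num; nlinarith [sin_ge_sub_cube hy]) hx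

lemma sin_le_sub_add_pow_five_div {x : ℝ} (hx : 0 ≤ x) :
    sin x ≤ x - x ^ 3 / 6 + x ^ 5 / 120 :=
  le_of_hasDerivAt_le_of_nonneg hasDerivAt_sin
    (fun y ↦ (((hasDerivAt_id y).sub ((hasDerivAt_pow 3 y).div_const 6)).add
      ((hasDerivAt_pow 5 y).div_const 120))) (by simp)
    (fun y hy ↦ by norm_num; nlinarith [cos_le_one_sub_sq_div_two_add_pow_four_div hy]) hx

lemma exp_neg_le_one_sub_add_sq_div_two {x : ℝ} (hx : 0 ≤ x) :
    exp (-x) ≤ 1 - x + x ^ 2 / 2 :=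
  le_of_hasDerivAt_le_of_nonneg (fun y ↦ (hasDerivAt_neg y).exp)
    (fun y ↦ ((hasDerivAt_const y 1).sub (hasDerivAt_id y)).add
      ((hasDerivAt_pow 2 y).div_const 2))
    (by simp) (fun y hy ↦ by norm_num; linarith [add_one_le_exp (-y)]) hx

lemma one_sub_add_sq_div_two_sub_pow_three_div_le_exp_neg {x : ℝ} (hx : 0 ≤ x) :
    1 - x + x ^ 2 / 2 - x ^ 3 / 6 ≤ exp (-x) :=
  le_of_hasDerivAt_le_of_nonneg
    (fun y ↦ (((hasDerivAt_const y 1).sub (hasDerivAt_id y)).add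
      ((hasDerivAt_pow 2 y).div_const 2)).sub ((hasDerivAt_pow 3 y).div_const 6))
    (fun y ↦ (hasDerivAt_neg y).exp)
    (by simp) (fun y hy ↦ by norm_num; linarith [exp_neg_le_one_sub_add_sq_div_two hy]) hx

lemma one_sub_sq_div_six_le_sin_div {t : ℝ} (ht : 0 < t) : 1 - t ^ 2 / 6 ≤ sin t / t := by
  rw [le_div_iff₀ ht]
  nlinarith [sin_ge_sub_cube ht.le]

/-- The cut-off `13/5` keeps `y = t ^ 2 / 6 ≤ 6/5`, where `y ^ 3 / 6 ≤ y ^ 2 / 5`, so the Taylor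
bound `1 - y + 3 y ^ 2 / 10` for `sin t / t` stays below `1 - y + y ^ 2 / 2 - y ^ 3 / 6 ≤ exp (-y)`.
-/
lemma sin_div_le_exp_neg_sq_div_six {t : ℝ} (ht : 0 < t) (ht' : t ≤ 13 / 5) :
    sin t / t ≤ exp (-(t ^ 2 / 6)) := by
  have hy₀ : 0 ≤ t ^ 2 / 6 := by positivity
  have hy₁ : t ^ 2 / 6 ≤ 6 / 5 := by nlinarith
  set y := t ^ 2 / 6
  rw [div_le_iff₀ ht]
  calc sin t ≤ t - t ^ 3 / 6 + t ^ 5 / 120 := sin_le_sub_add_pow_five_div ht.le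
    _ = t * (1 - y + 3 / 10 * y ^ 2) := by ring
    _ ≤ t * (1 - y + y ^ 2 / 2 - y ^ 3 / 6) := by
      gcongr
      nlinarith [mul_nonneg (sq_nonneg y) (show 0 ≤ 1 / 5 - y / 6 by linarith)]
    _ ≤ exp (-y) * t := by
      rw [mul_comm]
      gcongr
      exact one_sub_add_sq_div_two_sub_pow_three_div_le_exp_neg hy₀

end Real

theorem integral_rpow_mul_one_sub_rpow {a b : ℝ} (ha : 0 < a) (hb : 0 < b) :
    ∫ x in (0 : ℝ)..1, x ^ (a - 1) * (1 - x) ^ (b - 1) = Gamma a * Gamma b / Gamma (a + b) := by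
  have hbeta := Complex.betaIntegral_eq_Gamma_mul_div a b (by simpa) (by simpa)
  rw [Complex.betaIntegral] at hbeta
  have hcongr : ∀ x ∈ uIcc (0 : ℝ) 1, (x : ℂ) ^ ((a : ℂ) - 1) * (1 - (x : ℂ)) ^ ((b : ℂ) - 1)
      = ((x ^ (a - 1) * (1 - x) ^ (b - 1) : ℝ) : ℂ) := by
    intro x hx
    rw [uIcc_of_le zero_le_one] at hx
    push_cast
    rw [Complex.ofReal_cpow hx.1, Complex.ofReal_cpow (sub_nonneg.2 hx.2)]
    push_cast
    ring
  rw [intervalIntegral.integral_congr hcongr, intervalIntegral.integral_ofReal,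
    ← Complex.ofReal_add, Complex.Gamma_ofReal, Complex.Gamma_ofReal,
    Complex.Gamma_ofReal] at hbeta
  exact_mod_cast hbeta

theorem integral_one_sub_sq_rpow {β : ℝ} (hβ : -1 < β) :
    ∫ u in (0 : ℝ)..1, (1 - u ^ 2) ^ β = √π * Gamma (β + 1) / Gamma (β + 3 / 2) / 2 := by
  have hbeta : ∫ x in (0 : ℝ)..1, x ^ (1 / 2 - 1 : ℝ) * (1 - x) ^ (β + 1 - 1)
      = Gamma (1 / 2) * Gamma (β + 1) / Gamma (1 / 2 + (β + 1)) :=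
    integral_rpow_mul_one_sub_rpow (by norm_num) (by linarith)
  rw [Gamma_one_half_eq, show 1 / 2 + (β + 1) = β + 3 / 2 by ring, add_sub_cancel_right,
    intervalIntegral.integral_of_le zero_le_one, ← integral_Icc_eq_integral_Ioc] at hbeta
  have hsubst := integral_Icc_deriv_smul_of_deriv_nonneg (f := fun u : ℝ ↦ u ^ 2) (f' := (2 * ·))
    (g := fun x ↦ x ^ (1 / 2 - 1 : ℝ) * (1 - x) ^ β) (by fun_prop)
    (fun x _ ↦ by simpa using hasDerivAt_pow 2 x) (fun x hx ↦ by linarith [hx.1]) zero_le_one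
  have hcongr : ∀ u ∈ Ioc (0 : ℝ) 1,
      (2 * u) • ((u ^ 2) ^ (1 / 2 - 1 : ℝ) * (1 - u ^ 2) ^ β) = 2 * (1 - u ^ 2) ^ β := by
    intro u hu
    rw [← rpow_natCast, ← rpow_mul hu.1.le, smul_eq_mul]
    have := hu.1.ne'
    norm_num [rpow_neg_one]
    field_simp
  simp only [one_pow, zero_pow two_ne_zero] at hsubst
  rw [integral_Icc_eq_integral_Ioc, setIntegral_congr_fun measurableSet_Ioc hcongr,
    integral_const_mul, hbeta] at hsubst
  rw [intervalIntegral.integral_of_le zero_le_one]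
  linarith

theorem integral_one_sub_sq_div_rpow {r β : ℝ} (hr : 0 < r) (hβ : -1 < β) :
    ∫ t in (0 : ℝ)..√r, (1 - t ^ 2 / r) ^ β
      = √r * (√π * Gamma (β + 1) / Gamma (β + 3 / 2) / 2) := by
  have hsr : 0 < √r := sqrt_pos.2 hr
  have hscale := intervalIntegral.integral_comp_mul_left (fun t ↦ (1 - t ^ 2 / r) ^ β) hsr.ne'
    (a := 0) (b := 1)
  rw [mul_zero, mul_one, smul_eq_mul] at hscale
  simp only [mul_pow, sq_sqrt hr.le, mul_div_cancel_left₀ _ hr.ne',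
    integral_one_sub_sq_rpow hβ] at hscale
  rw [hscale, mul_inv_cancel_left₀ hsr.ne']

/-- At `t = 0` this is `0 / 0 = 0` rather than the limit `1`, which no integral sees. -/
noncomputable def sincPow (α t : ℝ) : ℝ := |sin t| ^ α / |t| ^ α

lemma sincPow_eq (α t : ℝ) : sincPow α t = |sin t / t| ^ α := by
  rw [sincPow, abs_div, div_rpow (abs_nonneg _) (abs_nonneg _)]

lemma sincPow_nonneg (α t : ℝ) : 0 ≤ sincPow α t := by
  rw [sincPow_eq]; positivity

lemma sincPow_abs (α t : ℝ) : sincPow α |t| = sincPow α t := by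
  rcases le_total 0 t with ht | ht
  · rw [abs_of_nonneg ht]
  · rw [abs_of_nonpos ht, sincPow, sincPow, sin_neg, abs_neg, abs_neg]

lemma sincPow_le_one {α : ℝ} (hα : 0 ≤ α) (t : ℝ) : sincPow α t ≤ 1 := by
  rw [sincPow_eq, abs_div]
  exact rpow_le_one (by positivity) (div_le_one_of_le₀ abs_sin_le_abs (abs_nonneg t)) hα

lemma sincPow_le_rpow_neg {α t : ℝ} (hα : 0 ≤ α) (ht : 0 < t) : sincPow α t ≤ t ^ (-α) := by
  rw [sincPow, abs_of_pos ht, rpow_neg ht.le, ← one_div]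
  gcongr
  exact rpow_le_one (abs_nonneg _) (abs_sin_le_one t) hα

lemma measurable_sincPow (α : ℝ) : Measurable (sincPow α) := by
  unfold sincPow; fun_prop

lemma integrableOn_sincPow_Ioc {α : ℝ} (hα : 0 ≤ α) (a b : ℝ) :
    IntegrableOn (sincPow α) (Ioc a b) :=
  Measure.integrableOn_of_bounded (M := 1) measure_Ioc_lt_top.ne
    (measurable_sincPow α).aestronglyMeasurable
    (ae_of_all _ fun t ↦ by
      rw [Real.norm_of_nonneg (sincPow_nonneg α t)]; exact sincPow_le_one hα t)

lemma integrableOn_sincPow_Ioi {α c : ℝ} (hα : 1 < α) (hc : 0 ≤ c) :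
    IntegrableOn (sincPow α) (Ioi c) := by
  have htail : IntegrableOn (sincPow α) (Ioi 1) :=
    (integrableOn_Ioi_rpow_of_lt (neg_lt_neg hα) one_pos).mono'
      (measurable_sincPow α).aestronglyMeasurable.restrict
      ((ae_restrict_iff' measurableSet_Ioi).2 (ae_of_all _ fun t (ht : 1 < t) ↦ by
        rw [Real.norm_of_nonneg (sincPow_nonneg α t)]
        exact sincPow_le_rpow_neg (by linarith) (one_pos.trans ht)))
  refine ((integrableOn_sincPow_Ioc (by linarith) 0 1).union htail).mono_set ?_
  rw [Ioc_union_Ioi_eq_Ioi zero_le_one]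
  exact Ioi_subset_Ioi hc

lemma integral_sincPow_eq_two_mul (α : ℝ) :
    ∫ t, sincPow α t = 2 * ∫ t in Ioi 0, sincPow α t := by
  simp_rw [← integral_comp_abs, sincPow_abs]

lemma setIntegral_sincPow_Ioi_le {α c : ℝ} (hα : 1 < α) (hc : 0 < c) :
    ∫ t in Ioi c, sincPow α t ≤ c ^ (1 - α) / (α - 1) := by
  have h := integral_Ioi_rpow_of_lt (neg_lt_neg hα) hc
  rw [show -α + 1 = 1 - α by ring, neg_div, ← div_neg, neg_sub] at h
  rw [← h]
  exact setIntegral_mono_on (integrableOn_sincPow_Ioi hα hc.le)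
    (integrableOn_Ioi_rpow_of_lt (neg_lt_neg hα) hc) measurableSet_Ioi
    fun t ht ↦ sincPow_le_rpow_neg (by linarith) (hc.trans ht)

lemma rpow_one_sub_sq_div_six_le_sincPow {α t : ℝ} (hα : 0 ≤ α) (ht : 0 < t) (ht₆ : t ≤ √6) :
    (1 - t ^ 2 / 6) ^ α ≤ sincPow α t := by
  have : t ^ 2 ≤ 6 := by simpa using pow_le_pow_left₀ ht.le ht₆ 2
  rw [sincPow_eq]
  exact rpow_le_rpow (by linarith) ((one_sub_sq_div_six_le_sin_div ht).trans (le_abs_self _)) hα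

lemma sincPow_le_exp {α t : ℝ} (hα : 0 ≤ α) (ht : 0 < t) (ht' : t ≤ 13 / 5) :
    sincPow α t ≤ exp (-(α / 6) * t ^ 2) := by
  have hsin : 0 ≤ sin t / t :=
    div_nonneg (sin_nonneg_of_nonneg_of_le_pi ht.le (by linarith [pi_gt_three])) ht.le
  rw [sincPow_eq, abs_of_nonneg hsin, show -(α / 6) * t ^ 2 = -(t ^ 2 / 6) * α by ring, exp_mul]
  exact rpow_le_rpow hsin (sin_div_le_exp_neg_sq_div_six ht ht') hα

lemma le_integral_sincPow {α : ℝ} (hα : 1 < α) :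
    √6 * (√π * Gamma (α + 1) / Gamma (α + 3 / 2)) ≤ ∫ t, sincPow α t := by
  have hlow : ∫ t in (0 : ℝ)..√6, (1 - t ^ 2 / 6) ^ α ≤ ∫ t in Ioi 0, sincPow α t := by
    rw [intervalIntegral.integral_of_le (sqrt_nonneg 6)]
    calc _ ≤ ∫ t in Ioc 0 √6, sincPow α t :=
          setIntegral_mono_on
            ((continuous_const.sub (by fun_prop)).rpow_const
              fun _ ↦ Or.inr (by linarith)).integrableOn_Ioc
            (integrableOn_sincPow_Ioc (by linarith) _ _) measurableSet_Ioc
            fun t ht ↦ rpow_one_sub_sq_div_six_le_sincPow (by linarith) ht.1 ht.2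
      _ ≤ ∫ t in Ioi 0, sincPow α t :=
          setIntegral_mono_set (integrableOn_sincPow_Ioi hα le_rfl)
            (ae_of_all _ (sincPow_nonneg α)) Ioc_subset_Ioi_self.eventuallyLE
  rw [integral_one_sub_sq_div_rpow (by norm_num) (by linarith)] at hlow
  rw [integral_sincPow_eq_two_mul]
  linarith

lemma setIntegral_sincPow_Ioc_le {α : ℝ} (hα : 0 < α) :
    ∫ t in Ioc 0 (13 / 5), sincPow α t ≤ √(π / (α / 6)) / 2 := by
  have hgauss : Integrable fun t : ℝ ↦ exp (-(α / 6) * t ^ 2) :=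
    integrable_exp_neg_mul_sq (by positivity)
  rw [← integral_gaussian_Ioi]
  calc _ ≤ ∫ t in Ioc 0 (13 / 5), exp (-(α / 6) * t ^ 2) :=
        setIntegral_mono_on (integrableOn_sincPow_Ioc hα.le _ _) hgauss.integrableOn
          measurableSet_Ioc fun t ht ↦ sincPow_le_exp hα.le ht.1 ht.2
    _ ≤ _ := setIntegral_mono_set hgauss.integrableOn (ae_of_all _ fun t ↦ (exp_pos _).le)
          Ioc_subset_Ioi_self.eventuallyLE

lemma two_mul_rpow_one_sub_le {α : ℝ} (hα : 2 ≤ α) :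
    2 * (13 / 5 : ℝ) ^ (1 - α) ≤ √(6 / α) * √π := by
  have hbernoulli : α / 2 ≤ (13 / 5 : ℝ) ^ (α - 1) := by
    have := one_add_mul_self_le_rpow_one_add (show (-1 : ℝ) ≤ 8 / 5 by norm_num)
      (show 1 ≤ α - 1 by linarith)
    norm_num at this
    linarith
  have hsqrt : √α ≤ α := sqrt_le_self_iff.2 (Or.inr (by linarith))
  have hsqrtα : 0 < √α := sqrt_pos.2 (by linarith)
  have h4 : 4 ≤ √6 * √π := by
    rw [← sqrt_mul (by norm_num), show (4 : ℝ) = √(4 ^ 2) by simp]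
    exact sqrt_le_sqrt (by nlinarith [pi_gt_three])
  rw [← neg_sub, rpow_neg (by norm_num), sqrt_div (by norm_num : (0 : ℝ) ≤ 6)]
  calc 2 * ((13 / 5 : ℝ) ^ (α - 1))⁻¹ ≤ 4 / √α := by
        rw [← div_eq_mul_inv, div_le_div_iff₀ (by positivity) hsqrtα]
        nlinarith
    _ ≤ √6 * √π / √α := by gcongr
    _ = √6 / √α * √π := by ring

lemma integral_sincPow_le {α : ℝ} (hα : 2 ≤ α) :
    ∫ t, sincPow α t ≤ √(6 / α) * √π * (1 + 1 / (α - 1)) := by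
  have hsplit : ∫ t in Ioi 0, sincPow α t
      = (∫ t in Ioc 0 (13 / 5), sincPow α t) + ∫ t in Ioi (13 / 5), sincPow α t := by
    rw [← Ioc_union_Ioi_eq_Ioi (by norm_num : (0 : ℝ) ≤ 13 / 5),
      setIntegral_union (Ioc_disjoint_Ioi le_rfl) measurableSet_Ioi
        (integrableOn_sincPow_Ioc (by linarith) _ _)
        (integrableOn_sincPow_Ioi (by linarith) (by norm_num))]
  have hgauss : √(π / (α / 6)) = √(6 / α) * √π := by
    rw [← sqrt_mul (by positivity)]
    congr 1
    field_simp
  have hnear := setIntegral_sincPow_Ioc_le (α := α) (by linarith)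
  have hfar := setIntegral_sincPow_Ioi_le (c := 13 / 5) (α := α) (by linarith) (by norm_num)
  have htail : 2 * ((13 / 5 : ℝ) ^ (1 - α) / (α - 1)) ≤ √(6 / α) * √π / (α - 1) := by
    rw [mul_div_assoc']
    exact div_le_div_of_nonneg_right (two_mul_rpow_one_sub_le hα) (by linarith)
  rw [hgauss] at hnear
  rw [integral_sincPow_eq_two_mul, hsplit, mul_one_add, mul_one_div]
  linarith

theorem ball_moment_two_sided (α : ℝ) (hα : 2 < α) :
    Real.sqrt (6 / α) * (Real.sqrt α * Real.Gamma (α + 1) * Real.sqrt Real.pi /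
        Real.Gamma (α + 3 / 2))
      ≤ (∫ t : ℝ, |Real.sin t| ^ α / |t| ^ α) ∧
    (∫ t : ℝ, |Real.sin t| ^ α / |t| ^ α)
      ≤ Real.sqrt (6 / α) * Real.sqrt Real.pi * (1 + 1 / (α - 1)) := by
  have hsqrt : √(6 / α) * √α = √6 := by
    rw [← sqrt_mul (by positivity), div_mul_cancel₀ _ (by positivity)]
  refine ⟨?_, integral_sincPow_le hα.le⟩
  calc √(6 / α) * (√α * Gamma (α + 1) * √π / Gamma (α + 3 / 2))
      = √6 * (√π * Gamma (α + 1) / Gamma (α + 3 / 2)) := by rw [← hsqrt]; ring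
    _ ≤ _ := le_integral_sincPow (by linarith)
end

section
/- For any fixed constant c > -1, if β = α - c, then lim_{α→∞} α^{(c+1)/2} ∫_{ℝ} |sin t|^α / |t|^{α-c} dt = 6^{(c+1)/2} Γ((c+1)/2). -/
/-!
Substituting `t = s / √α` turns the left-hand side into `∫ |s| ^ c * |sinc (s / √α)| ^ α ds`.
Since `sinc u = 1 - u² / 6 + O(u⁴)`, the integrand tends to `|s| ^ c * exp (-s² / 6)`, whose
integral is the Gamma value. Dominated convergence applies because `sinc u ^ 2 ≤ (1 + u² / 20)⁻¹`
on all of `ℝ`, and by Bernoulli's inequality `(1 + x / α) ^ α` increases with `α`, so for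
`α ≥ A := c + 2` the integrand is at most `|s| ^ c * (1 + s² / (20 A)) ^ (-A / 2)`.
-/

open Real MeasureTheory Filter
open Set Topology

namespace Real

lemma abs_sinc_sub_one_sub_sq_div_six_le {x : ℝ} (hx : |x| ≤ 1) :
    |sinc x - (1 - x ^ 2 / 6)| ≤ x ^ 4 / 100 := by
  rcases eq_or_ne x 0 with rfl | hx0
  · simp
  have hx' : 0 < |x| := abs_pos.2 hx0
  have hdiff : sinc x - (1 - x ^ 2 / 6) = (sin x - (x - x ^ 3 / 6)) / x := by
    rw [sinc_of_ne_zero hx0]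
    field_simp
  have hpow : |x| ^ 5 / 100 = x ^ 4 / 100 * |x| := by
    rw [← (Even.pow_abs ⟨2, rfl⟩ x : |x| ^ 4 = x ^ 4)]
    ring
  rw [hdiff, abs_div, div_le_iff₀ hx', ← hpow]
  exact sin_bound hx

lemma sinc_sq_le_inv_one_add_sq_div (x : ℝ) : sinc x ^ 2 ≤ (1 + x ^ 2 / 20)⁻¹ := by
  rcases eq_or_ne x 0 with rfl | hx0
  · simp
  have hx2 : 0 < x ^ 2 := by positivity
  rw [sinc_of_ne_zero hx0, div_pow, div_le_iff₀ hx2, inv_mul_eq_div, le_div_iff₀ (by positivity)]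
  rcases le_or_gt π |x| with hπ | hπ
  · have hx9 : 9 ≤ x ^ 2 := by
      rw [← sq_abs]
      nlinarith [pi_gt_three]
    nlinarith [sin_sq_le_one x]
  · -- `sin x = 2 sin (x/2) cos (x/2)` with `0 ≤ cos (x/2) ≤ 1 - x²/(2π²)`, and `2π² ≤ 20`.
    set w := x ^ 2 / (2 * π ^ 2) with hw
    have hw1 : w ≤ 1 / 2 := by
      rw [hw, div_le_iff₀ (by positivity), ← sq_abs]
      nlinarith [abs_nonneg x]
    have hw20 : x ^ 2 / 20 ≤ w := by
      rw [hw]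
      gcongr
      nlinarith [pi_lt_d2, pi_pos]
    have hcos0 : 0 ≤ cos (x / 2) := by
      apply cos_nonneg_of_mem_Icc
      constructor <;> linarith [abs_lt.1 hπ]
    have hcos : cos (x / 2) ≤ 1 - w := by
      have := cos_le_one_sub_mul_cos_sq (x := x / 2) (by rw [abs_div]; linarith [abs_nonneg x])
      rw [hw]
      convert this using 1
      field_simp
    have hsin : sin x ^ 2 ≤ x ^ 2 * cos (x / 2) ^ 2 := by
      have hdouble : sin x = 2 * sin (x / 2) * cos (x / 2) := by
        rw [← sin_two_mul]
        ring_nf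
      rw [hdouble]
      nlinarith [mul_le_mul_of_nonneg_right (sin_sq_le_sq (x := x / 2)) (sq_nonneg (cos (x / 2)))]
    calc sin x ^ 2 * (1 + x ^ 2 / 20) ≤ x ^ 2 * (1 - w) ^ 2 * (1 + w) := by
          gcongr
          exact hsin.trans (by gcongr)
      _ ≤ x ^ 2 := by
          rw [mul_assoc]
          exact mul_le_of_le_one_right (sq_nonneg x)
            (by nlinarith [mul_nonneg (sq_nonneg w) (sub_nonneg.2 hw1)])

end Real

lemma abs_div_sqrt_le_one {s α : ℝ} (h : s ^ 2 ≤ α) : |s / √α| ≤ 1 := by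
  rw [abs_div, abs_of_nonneg (sqrt_nonneg α)]
  exact div_le_one_of_le₀ (abs_le_sqrt h) (sqrt_nonneg α)

lemma tendsto_mul_sinc_div_sqrt_sub_one (s : ℝ) :
    Tendsto (fun α => α * (sinc (s / √α) - 1)) atTop (𝓝 (-(s ^ 2 / 6))) := by
  have hlim : Tendsto (fun α : ℝ => s ^ 4 / 100 * α⁻¹) atTop (𝓝 0) := by
    simpa using (tendsto_inv_atTop_zero (𝕜 := ℝ)).const_mul (s ^ 4 / 100)
  rw [tendsto_iff_norm_sub_tendsto_zero]
  refine squeeze_zero' (Eventually.of_forall fun _ => norm_nonneg _) ?_ hlim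
  filter_upwards [eventually_gt_atTop 0, eventually_ge_atTop (s ^ 2)] with α hα hαs
  have hsq : (s / √α) ^ 2 = s ^ 2 / α := by rw [div_pow, sq_sqrt hα.le]
  have htaylor := abs_sinc_sub_one_sub_sq_div_six_le (abs_div_sqrt_le_one hαs)
  have hrw : α * (sinc (s / √α) - 1) - -(s ^ 2 / 6)
      = α * (sinc (s / √α) - (1 - (s / √α) ^ 2 / 6)) := by
    rw [hsq]
    field_simp
    ring
  rw [Real.norm_eq_abs, hrw, abs_mul, abs_of_pos hα]
  calc α * |sinc (s / √α) - (1 - (s / √α) ^ 2 / 6)| ≤ α * ((s / √α) ^ 4 / 100) := by gcongr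
    _ = s ^ 4 / 100 * α⁻¹ := by
      rw [show (s / √α) ^ 4 = ((s / √α) ^ 2) ^ 2 by ring, hsq]
      field_simp

lemma tendsto_abs_sinc_div_sqrt_rpow (s : ℝ) :
    Tendsto (fun α => |sinc (s / √α)| ^ α) atTop (𝓝 (exp (-(s ^ 2 / 6)))) := by
  refine (tendsto_one_add_rpow_exp_of_tendsto (tendsto_mul_sinc_div_sqrt_sub_one s)).congr' ?_
  filter_upwards [eventually_ge_atTop (s ^ 2)] with α hαs
  have hu := abs_div_sqrt_le_one hαs
  have htaylor := abs_le.1 (abs_sinc_sub_one_sub_sq_div_six_le hu)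
  have hu2 : (s / √α) ^ 2 ≤ 1 := by rw [← sq_abs]; nlinarith [abs_nonneg (s / √α)]
  have hpos : 0 ≤ sinc (s / √α) := by nlinarith
  rw [add_sub_cancel, abs_of_nonneg hpos]

lemma one_add_div_rpow_self_le_of_le {x A α : ℝ} (hx : 0 ≤ x) (hA : 0 < A) (hAα : A ≤ α) :
    (1 + x / A) ^ A ≤ (1 + x / α) ^ α := by
  have hα : 0 < α := hA.trans_le hAα
  have hbernoulli := one_add_mul_self_le_rpow_one_add (s := x / α)
    (by linarith [div_nonneg hx hα.le]) ((one_le_div hA).2 hAα)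
  calc (1 + x / A) ^ A = (1 + α / A * (x / α)) ^ A := by field_simp
    _ ≤ ((1 + x / α) ^ (α / A)) ^ A := by gcongr
    _ = (1 + x / α) ^ α := by rw [← rpow_mul (by positivity), div_mul_cancel₀ _ hA.ne']

lemma abs_sinc_div_sqrt_rpow_le {A α : ℝ} (hA : 0 < A) (hAα : A ≤ α) (s : ℝ) :
    |sinc (s / √α)| ^ α ≤ (1 + s ^ 2 / (20 * A)) ^ (-(A / 2)) := by
  have hα : 0 < α := hA.trans_le hAα
  have hsq : (s / √α) ^ 2 = s ^ 2 / α := by rw [div_pow, sq_sqrt hα.le]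
  calc |sinc (s / √α)| ^ α = (sinc (s / √α) ^ 2) ^ (α / 2) := by
        rw [← sq_abs, ← rpow_natCast, ← rpow_mul (abs_nonneg _)]
        ring_nf
    _ ≤ ((1 + (s / √α) ^ 2 / 20)⁻¹) ^ (α / 2) := by
        gcongr
        exact sinc_sq_le_inv_one_add_sq_div _
    _ = ((1 + s ^ 2 / 20 / α) ^ α) ^ (-(1 / 2) : ℝ) := by
        rw [hsq, inv_rpow (by positivity), ← rpow_neg (by positivity), ← rpow_mul (by positivity)]
        ring_nf
    _ ≤ ((1 + s ^ 2 / 20 / A) ^ A) ^ (-(1 / 2) : ℝ) :=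
        rpow_le_rpow_of_nonpos (by positivity)
          (one_add_div_rpow_self_le_of_le (by positivity) hA hAα) (by norm_num)
    _ = (1 + s ^ 2 / (20 * A)) ^ (-(A / 2)) := by
        rw [← rpow_mul (by positivity), div_div]
        ring_nf

lemma integrable_abs_rpow_mul_one_add_sq_div_rpow_neg {c p K : ℝ} (hK : 0 < K) (hc : -1 < c)
    (hcp : c + 1 < 2 * p) :
    Integrable (fun x : ℝ => |x| ^ c * (1 + x ^ 2 / K) ^ (-p)) := by
  have hmeas : AEStronglyMeasurable (fun x : ℝ => |x| ^ c * (1 + x ^ 2 / K) ^ (-p)) :=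
    (by fun_prop : Measurable fun x : ℝ => |x| ^ c * (1 + x ^ 2 / K) ^ (-p)).aestronglyMeasurable
  refine LocallyIntegrable.integrable_of_isBigO_atTop_of_norm_isNegInvariant
    (g := fun x => x ^ (c - 2 * p)) ?_ ?_ ?_ ?_
  · refine locallyIntegrable_of_norm_le_rpow (C := 1) (α := -c) (by simp) (by simp; linarith)
      (ae_of_all _ fun x => ?_) hmeas
    rw [neg_neg, one_mul, norm_mul, norm_of_nonneg (by positivity), norm_of_nonneg (by positivity),
      Real.norm_eq_abs]
    exact mul_le_of_le_one_right (by positivity)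
      (rpow_le_one_of_one_le_of_nonpos (by simp; positivity) (by linarith))
  · exact Eventually.of_forall fun x => by simp
  · refine Asymptotics.IsBigO.of_bound (K ^ p) ?_
    filter_upwards [eventually_gt_atTop 0] with x hx
    rw [norm_mul, norm_of_nonneg (by positivity), norm_of_nonneg (by positivity),
      norm_of_nonneg (by positivity), abs_of_pos hx]
    calc x ^ c * (1 + x ^ 2 / K) ^ (-p) ≤ x ^ c * (x ^ 2 / K) ^ (-p) :=
          mul_le_mul_of_nonneg_left
            (rpow_le_rpow_of_nonpos (by positivity) (by linarith) (by linarith)) (by positivity)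
      _ = K ^ p * x ^ (c - 2 * p) := by
          rw [div_rpow (by positivity) hK.le, rpow_neg hK.le, div_inv_eq_mul, ← rpow_natCast,
            ← rpow_mul hx.le, sub_eq_add_neg, rpow_add hx]
          push_cast
          ring_nf
  · exact ⟨Ioi 1, Ioi_mem_atTop 1, integrableOn_Ioi_rpow_of_lt (by linarith) one_pos⟩

lemma abs_sin_rpow_div_abs_rpow {x : ℝ} (hx : x ≠ 0) (α c : ℝ) :
    |sin x| ^ α / |x| ^ (α - c) = |x| ^ c * |sinc x| ^ α := by
  have hx' : 0 < |x| := abs_pos.2 hx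
  rw [sinc_of_ne_zero hx, abs_div, div_rpow (abs_nonneg _) hx'.le, rpow_sub hx']
  field_simp

lemma rpow_mul_integral_abs_sin_rpow_div (c : ℝ) {α : ℝ} (hα : 0 < α) :
    α ^ ((c + 1) / 2) * ∫ t, |sin t| ^ α / |t| ^ (α - c)
      = ∫ s, |s| ^ c * |sinc (s / √α)| ^ α := by
  have hsqrt : 0 < √α := sqrt_pos.2 hα
  have hae : (fun t => |sin t| ^ α / |t| ^ (α - c))
      =ᵐ[volume] fun t => |t| ^ c * |sinc t| ^ α := by
    filter_upwards [Measure.ae_ne volume 0] with t ht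
    exact abs_sin_rpow_div_abs_rpow ht α c
  have hscale : ∀ s, |s / √α| ^ c * |sinc (s / √α)| ^ α
      = α ^ (-(c / 2)) * (|s| ^ c * |sinc (s / √α)| ^ α) := by
    intro s
    rw [abs_div, abs_of_pos hsqrt, div_rpow (abs_nonneg s) hsqrt.le, sqrt_eq_rpow,
      ← rpow_mul hα.le, rpow_neg hα.le]
    ring_nf
  have hcomp := Measure.integral_comp_div (fun t => |t| ^ c * |sinc t| ^ α) √α
  simp only [hscale, integral_const_mul, abs_of_pos hsqrt, smul_eq_mul] at hcomp
  have hsplit : α ^ ((c + 1) / 2) = α ^ (c / 2) * √α := by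
    rw [sqrt_eq_rpow, ← rpow_add hα]
    ring_nf
  have hcancel : α ^ (c / 2) * α ^ (-(c / 2)) = 1 := by
    rw [← rpow_add hα, add_neg_cancel, rpow_zero]
  rw [integral_congr_ae hae, hsplit, mul_assoc, ← hcomp, ← mul_assoc, hcancel, one_mul]

lemma integral_abs_rpow_mul_exp_neg_sq_div {b c : ℝ} (hb : 0 < b) (hc : -1 < c) :
    ∫ x, |x| ^ c * exp (-(x ^ 2 / b)) = b ^ ((c + 1) / 2) * Gamma ((c + 1) / 2) := by
  calc ∫ x, |x| ^ c * exp (-(x ^ 2 / b))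
        = ∫ x, (fun y : ℝ => y ^ c * exp (-b⁻¹ * y ^ (2 : ℝ))) |x| := by
        congr 1
        funext x
        simp only [rpow_two, sq_abs]
        ring_nf
    _ = 2 * ∫ x in Ioi 0, x ^ c * exp (-b⁻¹ * x ^ (2 : ℝ)) :=
        integral_comp_abs (f := fun y ↦ y ^ c * exp (-b⁻¹ * y ^ (2 : ℝ)))
    _ = b ^ ((c + 1) / 2) * Gamma ((c + 1) / 2) := by
        rw [integral_rpow_mul_exp_neg_mul_rpow two_pos hc (inv_pos.2 hb), inv_rpow hb.le,
          ← rpow_neg hb.le]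
        ring_nf

theorem moment_integral_asymptotic_const_diff (c : ℝ) (hc : -1 < c) :
    Tendsto (fun α : ℝ => α ^ ((c + 1) / 2) * ∫ t : ℝ, |Real.sin t| ^ α / |t| ^ (α - c))
      atTop (nhds (6 ^ ((c + 1) / 2) * Real.Gamma ((c + 1) / 2))) := by
  set A := c + 2
  have hA : 0 < A := by linarith
  have hlim : Tendsto (fun α => ∫ s, |s| ^ c * |sinc (s / √α)| ^ α) atTop
      (𝓝 (∫ s, |s| ^ c * exp (-(s ^ 2 / 6)))) := by
    refine tendsto_integral_filter_of_dominated_convergence _ ?_ ?_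
      (integrable_abs_rpow_mul_one_add_sq_div_rpow_neg (K := 20 * A) (p := A / 2) (by positivity)
        hc (by linarith))
      (Eventually.of_forall fun s => (tendsto_abs_sinc_div_sqrt_rpow s).const_mul _)
    · exact Eventually.of_forall fun α => by fun_prop
    · filter_upwards [eventually_ge_atTop A] with α hα
      refine Eventually.of_forall fun s => ?_
      rw [norm_of_nonneg (by positivity)]
      exact mul_le_mul_of_nonneg_left (abs_sinc_div_sqrt_rpow_le hA hα s) (by positivity)
  rw [← integral_abs_rpow_mul_exp_neg_sq_div (by norm_num) hc]
  refine hlim.congr' ?_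
  filter_upwards [eventually_gt_atTop 0] with α hα
  exact (rpow_mul_integral_abs_sin_rpow_div c hα).symm
end

section
/- As α → ∞, I(α, ⌊α⌋) ~ (6/α)^{(α-⌊α⌋+1)/2} Γ((α-⌊α⌋+1)/2), i.e. the ratio of the two sides tends to 1. -/
/-!
On `t > 0` the integrand equals `t ^ γ * (sin t / t) ^ α` with `γ = α - ⌊α⌋ ∈ [0, 1)`, and
`sin t / t = exp (-t² / 6 + O(t⁴))` near `0`. Below a cut-off `δ` with `α δ⁴ → 0`, the integrand
is therefore within a factor `exp (± α δ⁴ / 20)` of the Gaussian moment `t ^ γ * exp (-α t² / 6)`,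
whose integral over `(0, ∞)` is `(6 / α) ^ ((γ + 1) / 2) * Γ((γ + 1) / 2) / 2`, of order `1 / α`.
Above `δ` the integrand is at most `t ^ γ * exp (-α t² / 10)` on `(δ, 1]` and
`(sin 1) ^ (α - 3) * t⁻²` on `(1, ∞)`; once `α δ²` grows like a power of `α`, both pieces are
`o(1 / α)`. Evenness of the integrand gives the remaining factor `2`.
-/

open Real MeasureTheory Filter Set Topology

namespace Real

theorem sin_div_le_exp {t : ℝ} (h0 : 0 < t) (h1 : t ≤ 1) :
    sin t / t ≤ exp (-(t ^ 2 / 6) + t ^ 4 / 20) := by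
  have hsin : sin t ≤ t - t ^ 3 / 6 + t ^ 5 / 100 := by
    have := (abs_le.mp (sin_bound (x := t) (by rwa [abs_of_pos h0]))).2
    rw [abs_of_pos h0] at this
    linarith
  have hexp : (1 - t ^ 2 / 6) * (1 + t ^ 4 / 20) ≤ exp (-(t ^ 2 / 6) + t ^ 4 / 20) := by
    rw [exp_add]
    have := add_one_le_exp (-(t ^ 2 / 6))
    have := add_one_le_exp (t ^ 4 / 20)
    gcongr <;> linarith [pow_le_one₀ h0.le h1 (n := 2)]
  rw [div_le_iff₀ h0]
  nlinarith [pow_pos h0 5, pow_pos h0 7, pow_le_one₀ h0.le h1 (n := 2)]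

theorem exp_le_sin_div {t : ℝ} (h0 : 0 < t) (h1 : t ≤ 1) :
    exp (-(t ^ 2 / 6) - t ^ 4 / 20) ≤ sin t / t := by
  set y := t ^ 2 / 6 + t ^ 4 / 20
  have hy : 0 < 1 + y := by positivity
  -- `exp (-y) ≤ (1 + y)⁻¹`, and `(t - t³/6) (1 + y) ≥ t` for `t ≤ 1`
  have hexp : exp (-(t ^ 2 / 6) - t ^ 4 / 20) ≤ (1 + y)⁻¹ := by
    rw [show -(t ^ 2 / 6) - t ^ 4 / 20 = -y by ring, exp_neg]
    exact inv_anti₀ hy (by linarith [add_one_le_exp y])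
  refine hexp.trans ?_
  rw [inv_le_iff_one_le_mul₀ hy, div_mul_eq_mul_div, le_div_iff₀ h0]
  have := mul_le_mul_of_nonneg_right (sin_gt_sub_cube h0).le hy.le
  simp only [y] at this ⊢
  nlinarith [pow_pos h0 5, pow_pos h0 7, pow_le_one₀ h0.le h1 (n := 2)]

theorem abs_sin_div_le_sin_one {t : ℝ} (ht : 1 ≤ t) : |sin t| / t ≤ sin 1 := by
  have ht0 : 0 < t := one_pos.trans_le ht
  rw [div_le_iff₀ ht0]
  rcases le_or_gt t π with htπ | htπ
  · -- concavity of `sin` on `[0, π]`, with `1 = t⁻¹ • t + (1 - t⁻¹) • 0`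
    have := strictConcaveOn_sin_Icc.concaveOn.2 (x := t) (y := 0) ⟨ht0.le, htπ⟩
      ⟨le_rfl, pi_pos.le⟩ (inv_nonneg.2 ht0.le) (sub_nonneg.2 (inv_le_one_of_one_le₀ ht))
      (by ring)
    simp only [smul_eq_mul, mul_zero, add_zero, sin_zero, inv_mul_cancel₀ ht0.ne'] at this
    rw [abs_of_nonneg (sin_nonneg_of_nonneg_of_le_pi ht0.le htπ)]
    rw [inv_mul_le_iff₀ ht0] at this
    linarith
  · have := sin_gt_sub_cube (x := 1) one_pos
    nlinarith [abs_sin_le_one t, pi_gt_three]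

end Real

theorem integral_Ioi_mul_exp_neg_mul_sq {b : ℝ} (hb : 0 < b) (c : ℝ) :
    ∫ t in Ioi c, t * exp (-b * t ^ 2) = exp (-b * c ^ 2) / (2 * b) := by
  set F : ℝ → ℝ := fun t => -exp (-b * t ^ 2) / (2 * b)
  have hderiv (t : ℝ) : HasDerivAt F (t * exp (-b * t ^ 2)) t := by
    refine ((((hasDerivAt_pow 2 t).const_mul (-b)).exp.neg).div_const (2 * b)).congr_deriv ?_
    field_simp
    ring
  have hlim : Tendsto F atTop (𝓝 0) := by
    have := ((tendsto_exp_atBot.comp <| (tendsto_pow_atTop two_ne_zero).const_mul_atTop_of_neg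
      (neg_neg_of_pos hb)).neg).div_const (2 * b)
    simpa [F, Function.comp_def] using this
  rw [integral_Ioi_of_hasDerivAt_of_tendsto (hderiv c).continuousAt.continuousWithinAt
    (fun t _ => hderiv t) (integrable_mul_exp_neg_mul_sq hb).integrableOn hlim]
  simp only [F]
  ring

theorem integral_Ioi_rpow_mul_exp_neg_mul_sq_le {b c γ : ℝ} (hb : 0 < b) (hc0 : 0 < c)
    (hc1 : c ≤ 1) (hγ0 : 0 ≤ γ) (hγ1 : γ ≤ 1) :
    ∫ t in Ioi c, t ^ γ * exp (-b * t ^ 2) ≤ exp (-b * c ^ 2) / (2 * b * c) := by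
  have hle : ∀ t ∈ Ioi c, t ^ γ * exp (-b * t ^ 2) ≤ c⁻¹ * (t * exp (-b * t ^ 2)) := by
    intro t (ht : c < t)
    have ht0 : 0 < t := hc0.trans ht
    have hpow : t ^ γ ≤ t / c := by
      rcases le_or_gt t 1 with ht1 | ht1
      · calc t ^ γ ≤ 1 := rpow_le_one ht0.le ht1 hγ0
          _ ≤ t / c := (one_le_div hc0).2 ht.le
      · calc t ^ γ ≤ t ^ (1 : ℝ) := rpow_le_rpow_of_exponent_le ht1.le hγ1
          _ = t / 1 := by rw [rpow_one, div_one]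
          _ ≤ t / c := div_le_div_of_nonneg_left ht0.le hc0 hc1
    rw [← mul_assoc, inv_mul_eq_div]
    exact mul_le_mul_of_nonneg_right hpow (exp_nonneg _)
  calc ∫ t in Ioi c, t ^ γ * exp (-b * t ^ 2)
      ≤ ∫ t in Ioi c, c⁻¹ * (t * exp (-b * t ^ 2)) :=
        setIntegral_mono_on
          ((integrable_rpow_mul_exp_neg_mul_sq hb (by linarith)).integrableOn.mono_set
            (Ioi_subset_Ioi hc0.le))
          ((integrable_mul_exp_neg_mul_sq hb).integrableOn.const_mul _) measurableSet_Ioi hle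
    _ = exp (-b * c ^ 2) / (2 * b * c) := by
        rw [integral_const_mul, integral_Ioi_mul_exp_neg_mul_sq hb]
        field_simp

theorem two_mul_integral_Ioi_rpow_mul_exp_neg_mul_sq {b γ : ℝ} (hb : 0 < b) (hγ : -1 < γ) :
    2 * ∫ t in Ioi 0, t ^ γ * exp (-b * t ^ 2) = b⁻¹ ^ ((γ + 1) / 2) * Gamma ((γ + 1) / 2) := by
  have := integral_rpow_mul_exp_neg_mul_rpow two_pos hγ hb
  simp only [rpow_two] at this
  rw [this, inv_rpow hb.le, ← rpow_neg hb.le, neg_div]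
  ring

theorem rpow_mul_Gamma_eq_two_mul_integral {α γ : ℝ} (hα : 0 < α) (hγ : -1 < γ) :
    (6 / α) ^ ((γ + 1) / 2) * Gamma ((γ + 1) / 2) =
      2 * ∫ t in Ioi 0, t ^ γ * exp (-(α / 6) * t ^ 2) := by
  rw [two_mul_integral_Ioi_rpow_mul_exp_neg_mul_sq (by positivity) hγ, inv_div]

theorem exists_pos_le_Gamma_of_mem_Icc {a b : ℝ} (ha : 0 < a) (hab : a ≤ b) :
    ∃ c > 0, ∀ s ∈ Icc a b, c ≤ Gamma s := by
  have hcont : ContinuousOn Gamma (Icc a b) := fun s hs =>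
    (differentiableAt_Gamma fun m => by linarith [hs.1, m.cast_nonneg (α := ℝ)]).continuousAt
      |>.continuousWithinAt
  obtain ⟨s₀, hs₀, hmin⟩ := isCompact_Icc.exists_isMinOn (nonempty_Icc.2 hab) hcont
  exact ⟨Gamma s₀, Gamma_pos_of_pos (ha.trans_le hs₀.1), fun s hs => hmin hs⟩

theorem mul_le_rpow_mul_Gamma {α γ c : ℝ} (hα : 6 ≤ α) (hγ0 : 0 ≤ γ) (hγ1 : γ ≤ 1) (hc0 : 0 ≤ c)
    (hc : ∀ s ∈ Icc (1 / 2 : ℝ) 1, c ≤ Gamma s) :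
    6 / α * c ≤ (6 / α) ^ ((γ + 1) / 2) * Gamma ((γ + 1) / 2) := by
  have hbase : 6 / α ≤ 1 := (div_le_one (by linarith)).2 hα
  have hpow : 6 / α ≤ (6 / α) ^ ((γ + 1) / 2) := by
    simpa using rpow_le_rpow_of_exponent_ge (by positivity) hbase (by linarith : (γ + 1) / 2 ≤ 1)
  exact mul_le_mul hpow (hc _ ⟨by linarith, by linarith⟩) hc0 (by positivity)

theorem setIntegral_Ioi_eq_Ioc_add_Ioi {f : ℝ → ℝ} {a b : ℝ} (hab : a ≤ b)
    (hf : IntegrableOn f (Ioi a)) :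
    ∫ t in Ioi a, f t = (∫ t in Ioc a b, f t) + ∫ t in Ioi b, f t := by
  rw [← setIntegral_union Ioc_disjoint_Ioi_same measurableSet_Ioi
    (hf.mono_set Ioc_subset_Ioi_self) (hf.mono_set (Ioi_subset_Ioi hab)), Ioc_union_Ioi_eq_Ioi hab]

section SinMoment

variable {α n t δ : ℝ}

theorem abs_sin_rpow_div_eq (ht : 0 < t) :
    |sin t| ^ α / |t| ^ n = t ^ (α - n) * (|sin t| / t) ^ α := by
  rw [abs_of_pos ht, div_rpow (abs_nonneg _) ht.le, rpow_sub ht]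
  field_simp

theorem abs_sin_rpow_div_le_inv_one_add_sq (hn2 : 2 ≤ n) (hn : n ≤ α) (t : ℝ) :
    |sin t| ^ α / |t| ^ n ≤ 2 * (1 + t ^ 2)⁻¹ := by
  rcases le_or_gt |t| 1 with ht | ht
  · calc |sin t| ^ α / |t| ^ n ≤ 1 := by
          refine div_le_one_of_le₀ ?_ (rpow_nonneg (abs_nonneg t) n)
          calc |sin t| ^ α ≤ |t| ^ α := rpow_le_rpow (abs_nonneg _) abs_sin_le_abs (by linarith)
            _ ≤ |t| ^ n := rpow_le_rpow_of_exponent_ge' (abs_nonneg t) ht (by linarith) hn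
      _ ≤ 2 * (1 + t ^ 2)⁻¹ := by
          rw [← div_eq_mul_inv, le_div_iff₀ (by positivity)]
          nlinarith [sq_abs t, abs_nonneg t]
  · calc |sin t| ^ α / |t| ^ n ≤ 1 / |t| ^ (2 : ℝ) := by
          gcongr
          · exact rpow_le_one (abs_nonneg _) (abs_sin_le_one t) (by linarith)
          · exact ht.le
      _ ≤ 2 * (1 + t ^ 2)⁻¹ := by
          have : 1 < t ^ 2 := by nlinarith [sq_abs t, abs_nonneg t]
          rw [rpow_two, sq_abs, ← div_eq_mul_inv, div_le_div_iff₀ (by positivity) (by positivity)]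
          linarith

theorem integrable_abs_sin_rpow_div (hn2 : 2 ≤ n) (hn : n ≤ α) :
    Integrable fun t => |sin t| ^ α / |t| ^ n :=
  (integrable_inv_one_add_sq.const_mul 2).mono' (Measurable.aestronglyMeasurable (by fun_prop)) <|
    ae_of_all _ fun t => by
      rw [norm_of_nonneg (by positivity)]
      exact abs_sin_rpow_div_le_inv_one_add_sq hn2 hn t

theorem integral_abs_sin_rpow_div_eq_two_mul (α n : ℝ) :
    ∫ t, |sin t| ^ α / |t| ^ n = 2 * ∫ t in Ioi 0, |sin t| ^ α / |t| ^ n := by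
  rw [← integral_comp_abs]
  congr with t
  rcases abs_choice t with h | h <;> simp [h]

theorem abs_sin_rpow_div_le_of_le (hα : 0 ≤ α) (h0 : 0 < t) (htδ : t ≤ δ) (hδ : δ ≤ 1) :
    |sin t| ^ α / |t| ^ n ≤ exp (α * δ ^ 4 / 20) * (t ^ (α - n) * exp (-(α / 6) * t ^ 2)) := by
  have hsin := sin_pos_of_pos_of_lt_pi h0 (by linarith [pi_gt_three])
  have hexp : (sin t / t) ^ α ≤ exp (-(α / 6) * t ^ 2) * exp (α * δ ^ 4 / 20) := calc
    (sin t / t) ^ α ≤ exp (-(t ^ 2 / 6) + t ^ 4 / 20) ^ α :=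
      rpow_le_rpow (div_pos hsin h0).le (sin_div_le_exp h0 (htδ.trans hδ)) hα
    _ ≤ exp (-(α / 6) * t ^ 2) * exp (α * δ ^ 4 / 20) := by
      rw [← exp_mul, ← exp_add]
      gcongr
      nlinarith [pow_le_pow_left₀ h0.le htδ 4]
  rw [abs_sin_rpow_div_eq h0, abs_of_pos hsin]
  calc t ^ (α - n) * (sin t / t) ^ α
      ≤ t ^ (α - n) * (exp (-(α / 6) * t ^ 2) * exp (α * δ ^ 4 / 20)) := by gcongr
    _ = _ := by ring

theorem le_abs_sin_rpow_div_of_le (hα : 0 ≤ α) (h0 : 0 < t) (htδ : t ≤ δ) (hδ : δ ≤ 1) :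
    exp (-(α * δ ^ 4 / 20)) * (t ^ (α - n) * exp (-(α / 6) * t ^ 2)) ≤ |sin t| ^ α / |t| ^ n := by
  have hsin := sin_pos_of_pos_of_lt_pi h0 (by linarith [pi_gt_three])
  have hexp : exp (-(α / 6) * t ^ 2) * exp (-(α * δ ^ 4 / 20)) ≤ (sin t / t) ^ α := calc
    exp (-(α / 6) * t ^ 2) * exp (-(α * δ ^ 4 / 20)) ≤ exp (-(t ^ 2 / 6) - t ^ 4 / 20) ^ α := by
      rw [← exp_mul, ← exp_add]
      gcongr
      nlinarith [pow_le_pow_left₀ h0.le htδ 4]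
    _ ≤ (sin t / t) ^ α := rpow_le_rpow (exp_pos _).le (exp_le_sin_div h0 (htδ.trans hδ)) hα
  rw [abs_sin_rpow_div_eq h0, abs_of_pos hsin]
  calc exp (-(α * δ ^ 4 / 20)) * (t ^ (α - n) * exp (-(α / 6) * t ^ 2))
      = t ^ (α - n) * (exp (-(α / 6) * t ^ 2) * exp (-(α * δ ^ 4 / 20))) := by ring
    _ ≤ _ := by gcongr

theorem abs_sin_rpow_div_le_of_le_one (hα : 0 ≤ α) (h0 : 0 < t) (h1 : t ≤ 1) :
    |sin t| ^ α / |t| ^ n ≤ t ^ (α - n) * exp (-(α / 10) * t ^ 2) := by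
  refine (abs_sin_rpow_div_le_of_le hα h0 le_rfl h1).trans ?_
  rw [mul_left_comm, ← exp_add]
  gcongr
  nlinarith [pow_le_pow_of_le_one h0.le h1 (by norm_num : 2 ≤ 4)]

theorem abs_sin_rpow_div_le_of_one_le (hα : 3 ≤ α) (hn : α ≤ n + 1) (ht : 1 ≤ t) :
    |sin t| ^ α / |t| ^ n ≤ sin 1 ^ (α - 3) * t ^ (-2 : ℝ) := by
  have h0 : 0 < t := one_pos.trans_le ht
  have hq : 0 ≤ |sin t| / t := by positivity
  have hsplit : (|sin t| / t) ^ α = (|sin t| / t) ^ (α - 3) * (|sin t| / t) ^ (3 : ℝ) := by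
    rw [← rpow_add' hq (by linarith), sub_add_cancel]
  rw [abs_sin_rpow_div_eq h0, hsplit]
  calc t ^ (α - n) * ((|sin t| / t) ^ (α - 3) * (|sin t| / t) ^ (3 : ℝ))
      ≤ t ^ (1 : ℝ) * (sin 1 ^ (α - 3) * (1 / t) ^ (3 : ℝ)) := by
        gcongr
        · linarith
        · exact rpow_nonneg (sin_pos_of_pos_of_lt_pi one_pos (by linarith [pi_gt_three])).le _
        · exact abs_sin_div_le_sin_one ht
        · exact abs_sin_le_one t
    _ = sin 1 ^ (α - 3) * t ^ (-2 : ℝ) := by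
        rw [one_div, inv_rpow h0.le, ← rpow_neg h0.le, mul_left_comm, ← rpow_add h0]
        norm_num

theorem integral_Ioc_zero_abs_sin_rpow_div_le (hn2 : 2 ≤ n) (hn : n ≤ α) (hδ : δ ≤ 1) :
    ∫ t in Ioc 0 δ, |sin t| ^ α / |t| ^ n ≤
      exp (α * δ ^ 4 / 20) * ∫ t in Ioi 0, t ^ (α - n) * exp (-(α / 6) * t ^ 2) := by
  have hg := integrable_rpow_mul_exp_neg_mul_sq (b := α / 6) (by linarith) (s := α - n)
    (by linarith)
  calc ∫ t in Ioc 0 δ, |sin t| ^ α / |t| ^ n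
      ≤ ∫ t in Ioc 0 δ, exp (α * δ ^ 4 / 20) * (t ^ (α - n) * exp (-(α / 6) * t ^ 2)) :=
        setIntegral_mono_on (integrable_abs_sin_rpow_div hn2 hn).integrableOn
          (hg.integrableOn.const_mul _) measurableSet_Ioc
          fun t ht => abs_sin_rpow_div_le_of_le (by linarith) ht.1 ht.2 hδ
    _ ≤ _ := by
        rw [integral_const_mul]
        refine mul_le_mul_of_nonneg_left (setIntegral_mono_set hg.integrableOn ?_
          Ioc_subset_Ioi_self.eventuallyLE) (exp_pos _).le
        filter_upwards [ae_restrict_mem measurableSet_Ioi] with t (ht : 0 < t)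
        positivity

theorem integral_Ioc_one_abs_sin_rpow_div_le (hn2 : 2 ≤ n) (hn : n ≤ α) (hn1 : α ≤ n + 1)
    (hδ0 : 0 < δ) (hδ1 : δ ≤ 1) :
    ∫ t in Ioc δ 1, |sin t| ^ α / |t| ^ n ≤ exp (-(α / 10) * δ ^ 2) / (2 * (α / 10) * δ) := by
  have hg := integrable_rpow_mul_exp_neg_mul_sq (b := α / 10) (by linarith) (s := α - n)
    (by linarith)
  calc ∫ t in Ioc δ 1, |sin t| ^ α / |t| ^ n
      ≤ ∫ t in Ioc δ 1, t ^ (α - n) * exp (-(α / 10) * t ^ 2) :=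
        setIntegral_mono_on (integrable_abs_sin_rpow_div hn2 hn).integrableOn hg.integrableOn
          measurableSet_Ioc fun t ht => abs_sin_rpow_div_le_of_le_one (by linarith)
            (hδ0.trans ht.1) ht.2
    _ ≤ ∫ t in Ioi δ, t ^ (α - n) * exp (-(α / 10) * t ^ 2) := by
        refine setIntegral_mono_set hg.integrableOn ?_ Ioc_subset_Ioi_self.eventuallyLE
        filter_upwards [ae_restrict_mem measurableSet_Ioi] with t (ht : δ < t)
        have := hδ0.trans ht
        positivity
    _ ≤ _ := integral_Ioi_rpow_mul_exp_neg_mul_sq_le (by linarith) hδ0 hδ1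
        (by linarith) (by linarith)

theorem integral_Ioi_one_abs_sin_rpow_div_le (hα : 3 ≤ α) (hn : n ≤ α) (hn1 : α ≤ n + 1) :
    ∫ t in Ioi 1, |sin t| ^ α / |t| ^ n ≤ sin 1 ^ (α - 3) := by
  calc ∫ t in Ioi 1, |sin t| ^ α / |t| ^ n ≤ ∫ t in Ioi 1, sin 1 ^ (α - 3) * t ^ (-2 : ℝ) :=
        setIntegral_mono_on (integrable_abs_sin_rpow_div (by linarith) hn).integrableOn
          ((integrableOn_Ioi_rpow_of_lt (by norm_num) one_pos).const_mul _) measurableSet_Ioi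
          fun t ht => abs_sin_rpow_div_le_of_one_le hα hn1 (le_of_lt ht)
    _ = sin 1 ^ (α - 3) := by
        rw [integral_const_mul, integral_Ioi_rpow_of_lt (by norm_num) one_pos]
        norm_num

theorem integral_Ioi_abs_sin_rpow_div_le (hα : 3 ≤ α) (hn : n ≤ α) (hn1 : α ≤ n + 1)
    (hδ0 : 0 < δ) (hδ1 : δ ≤ 1) :
    ∫ t in Ioi 0, |sin t| ^ α / |t| ^ n ≤
      exp (α * δ ^ 4 / 20) * (∫ t in Ioi 0, t ^ (α - n) * exp (-(α / 6) * t ^ 2)) +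
        (exp (-(α / 10) * δ ^ 2) / (2 * (α / 10) * δ) + sin 1 ^ (α - 3)) := by
  have hF := (integrable_abs_sin_rpow_div (α := α) (n := n) (by linarith) hn).integrableOn
    (s := Ioi 0)
  rw [setIntegral_Ioi_eq_Ioc_add_Ioi hδ0.le hF,
    setIntegral_Ioi_eq_Ioc_add_Ioi hδ1 (hF.mono_set (Ioi_subset_Ioi hδ0.le))]
  linarith [integral_Ioc_zero_abs_sin_rpow_div_le (by linarith) hn hδ1,
    integral_Ioc_one_abs_sin_rpow_div_le (by linarith) hn hn1 hδ0 hδ1,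
    integral_Ioi_one_abs_sin_rpow_div_le hα hn hn1]

theorem le_integral_Ioi_abs_sin_rpow_div (hn2 : 2 ≤ n) (hn : n ≤ α) (hn1 : α ≤ n + 1)
    (hδ0 : 0 < δ) (hδ1 : δ ≤ 1) :
    exp (-(α * δ ^ 4 / 20)) * ((∫ t in Ioi 0, t ^ (α - n) * exp (-(α / 6) * t ^ 2)) -
        exp (-(α / 6) * δ ^ 2) / (2 * (α / 6) * δ)) ≤
      ∫ t in Ioi 0, |sin t| ^ α / |t| ^ n := by
  have hF := (integrable_abs_sin_rpow_div hn2 hn).integrableOn (s := Ioi 0)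
  have hg := (integrable_rpow_mul_exp_neg_mul_sq (b := α / 6) (by linarith)
    (s := α - n) (by linarith)).integrableOn (s := Ioi 0)
  have htail := integral_Ioi_rpow_mul_exp_neg_mul_sq_le (b := α / 6) (γ := α - n) (by linarith)
    hδ0 hδ1 (by linarith) (by linarith)
  calc exp (-(α * δ ^ 4 / 20)) * ((∫ t in Ioi 0, t ^ (α - n) * exp (-(α / 6) * t ^ 2)) -
        exp (-(α / 6) * δ ^ 2) / (2 * (α / 6) * δ))
      ≤ exp (-(α * δ ^ 4 / 20)) * ∫ t in Ioc 0 δ, t ^ (α - n) * exp (-(α / 6) * t ^ 2) := by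
        rw [setIntegral_Ioi_eq_Ioc_add_Ioi hδ0.le hg]
        gcongr
        linarith
    _ = ∫ t in Ioc 0 δ, exp (-(α * δ ^ 4 / 20)) * (t ^ (α - n) * exp (-(α / 6) * t ^ 2)) :=
        (integral_const_mul _ _).symm
    _ ≤ ∫ t in Ioc 0 δ, |sin t| ^ α / |t| ^ n :=
        setIntegral_mono_on ((hg.mono_set Ioc_subset_Ioi_self).const_mul _)
          (hF.mono_set Ioc_subset_Ioi_self) measurableSet_Ioc
          fun t ht => le_abs_sin_rpow_div_of_le (by linarith) ht.1 ht.2 hδ1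
    _ ≤ ∫ t in Ioi 0, |sin t| ^ α / |t| ^ n :=
        setIntegral_mono_set hF (ae_of_all _ fun t => by positivity)
          Ioc_subset_Ioi_self.eventuallyLE

theorem integral_abs_sin_rpow_div_le (hα : 3 ≤ α) (hn : n ≤ α) (hn1 : α ≤ n + 1)
    (hδ0 : 0 < δ) (hδ1 : δ ≤ 1) :
    ∫ t, |sin t| ^ α / |t| ^ n ≤
      exp (α * δ ^ 4 / 20) * ((6 / α) ^ ((α - n + 1) / 2) * Gamma ((α - n + 1) / 2)) +
        2 * (exp (-(α / 10) * δ ^ 2) / (2 * (α / 10) * δ) + sin 1 ^ (α - 3)) := by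
  rw [integral_abs_sin_rpow_div_eq_two_mul,
    rpow_mul_Gamma_eq_two_mul_integral (by linarith) (by linarith)]
  linarith [integral_Ioi_abs_sin_rpow_div_le hα hn hn1 hδ0 hδ1]

theorem le_integral_abs_sin_rpow_div (hn2 : 2 ≤ n) (hn : n ≤ α) (hn1 : α ≤ n + 1)
    (hδ0 : 0 < δ) (hδ1 : δ ≤ 1) :
    exp (-(α * δ ^ 4 / 20)) * ((6 / α) ^ ((α - n + 1) / 2) * Gamma ((α - n + 1) / 2) -
        2 * (exp (-(α / 6) * δ ^ 2) / (2 * (α / 6) * δ))) ≤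
      ∫ t, |sin t| ^ α / |t| ^ n := by
  rw [integral_abs_sin_rpow_div_eq_two_mul,
    rpow_mul_Gamma_eq_two_mul_integral (by linarith) (by linarith)]
  linarith [le_integral_Ioi_abs_sin_rpow_div hn2 hn hn1 hδ0 hδ1]

end SinMoment

theorem tendsto_div_of_le_of_le {ι : Type*} {l : Filter ι} {f g m kl ku el eu : ι → ℝ}
    (hkl : Tendsto kl l (𝓝 1)) (hku : Tendsto ku l (𝓝 1))
    (hel : Tendsto (fun i => el i / m i) l (𝓝 0)) (heu : Tendsto (fun i => eu i / m i) l (𝓝 0))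
    (hm : ∀ᶠ i in l, 0 < m i ∧ m i ≤ g i)
    (hlo : ∀ᶠ i in l, kl i * (g i - el i) ≤ f i) (hhi : ∀ᶠ i in l, f i ≤ ku i * g i + eu i) :
    Tendsto (fun i => f i / g i) l (𝓝 1) := by
  have hdiv {e : ι → ℝ} (he : Tendsto (fun i => e i / m i) l (𝓝 0)) :
      Tendsto (fun i => e i / g i) l (𝓝 0) := by
    refine squeeze_zero_norm' ?_ (by simpa using he.abs)
    filter_upwards [hm] with i ⟨hm0, hmg⟩
    rw [norm_div, norm_of_nonneg (hm0.trans_le hmg).le, abs_div, abs_of_pos hm0]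
    exact div_le_div_of_nonneg_left (abs_nonneg _) hm0 hmg
  refine tendsto_of_tendsto_of_tendsto_of_le_of_le'
    (by simpa using hkl.mul (tendsto_const_nhds.sub (hdiv hel)))
    (by simpa using hku.add (hdiv heu)) ?_ ?_
  · filter_upwards [hm, hlo] with i ⟨hm0, hmg⟩ hi
    rw [le_div_iff₀ (hm0.trans_le hmg), mul_assoc, one_sub_mul, div_mul_cancel₀ _ (by linarith)]
    exact hi
  · filter_upwards [hm, hhi] with i ⟨hm0, hmg⟩ hi
    rw [div_le_iff₀ (hm0.trans_le hmg), add_mul, div_mul_cancel₀ _ (by linarith)]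
    exact hi

theorem Filter.Tendsto.of_comp_pow {β : Type*} {f : ℝ → β} {l : Filter β} {k : ℕ} (hk : k ≠ 0)
    (h : Tendsto (fun u => f (u ^ k)) atTop l) : Tendsto f atTop l :=
  (h.comp (tendsto_rpow_atTop (by positivity : 0 < (k : ℝ)⁻¹))).congr' <| by
    filter_upwards [eventually_ge_atTop 0] with x hx
    simp [rpow_inv_natCast_pow hx hk]

theorem tendsto_rpow_sub_div {r c : ℝ} (hr0 : 0 < r) (hr1 : r < 1) (hc : c ≠ 0) :
    Tendsto (fun u : ℝ => r ^ (u ^ 3 - 3) / (6 / u ^ 3 * c)) atTop (𝓝 0) := by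
  have := (tendsto_rpow_mul_exp_neg_mul_atTop_nhds_zero 1 (-log r)
    (neg_pos.2 (log_neg hr0 hr1))).comp (tendsto_pow_atTop three_ne_zero) |>.const_mul
      (r ^ (-3 : ℝ) / (6 * c))
  rw [mul_zero] at this
  refine this.congr' ?_
  filter_upwards [eventually_gt_atTop 0] with u hu
  rw [Function.comp_apply, rpow_one, rpow_def_of_pos hr0, rpow_def_of_pos hr0, neg_neg, mul_sub,
    exp_sub, mul_neg, exp_neg]
  field_simp

theorem tendsto_pow_three_mul_inv_pow_four :
    Tendsto (fun u : ℝ => u ^ 3 * u⁻¹ ^ 4) atTop (𝓝 0) :=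
  tendsto_inv_atTop_zero.congr' <| by
    filter_upwards [eventually_ne_atTop 0] with u hu
    field_simp

/-- The bound of `integral_Ioi_rpow_mul_exp_neg_mul_sq_le` at `b = u³ / k`, `c = u⁻¹`, relative to
`6 c / u³`: it equals `k u exp (-u / k) / (12 c)`. -/
theorem tendsto_gaussian_tail_div {k c : ℝ} (hk : 0 < k) (hc : c ≠ 0) :
    Tendsto (fun u : ℝ => exp (-(u ^ 3 / k) * u⁻¹ ^ 2) / (2 * (u ^ 3 / k) * u⁻¹) / (6 / u ^ 3 * c))
      atTop (𝓝 0) := by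
  have := (tendsto_rpow_mul_exp_neg_mul_atTop_nhds_zero 1 k⁻¹ (inv_pos.2 hk)).const_mul
    (k / (12 * c))
  rw [mul_zero] at this
  refine this.congr' ?_
  filter_upwards [eventually_gt_atTop 0] with u hu
  rw [rpow_one]
  field_simp
  ring_nf

theorem moment_integral_floor_asymptotic :
    Tendsto (fun α : ℝ =>
        (∫ t : ℝ, |Real.sin t| ^ α / |t| ^ ((⌊α⌋ : ℝ))) /
          ((6 / α) ^ ((α - ⌊α⌋ + 1) / 2) * Real.Gamma ((α - ⌊α⌋ + 1) / 2)))
      atTop (nhds 1) := by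
  obtain ⟨c, hc, hcΓ⟩ := exists_pos_le_Gamma_of_mem_Icc (b := 1) (by norm_num : (0 : ℝ) < 1 / 2)
    (by norm_num)
  -- with `α = u³` and cut-off `δ = u⁻¹`: `α δ⁴ = u⁻¹ → 0` while `α δ² = u → ∞`
  refine Tendsto.of_comp_pow three_ne_zero ?_
  have hε := tendsto_pow_three_mul_inv_pow_four.div_const (20 : ℝ)
  refine tendsto_div_of_le_of_le (m := fun u => 6 / u ^ 3 * c)
    (kl := fun u => exp (-(u ^ 3 * u⁻¹ ^ 4 / 20))) (ku := fun u => exp (u ^ 3 * u⁻¹ ^ 4 / 20))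
    (el := fun u => 2 * (exp (-(u ^ 3 / 6) * u⁻¹ ^ 2) / (2 * (u ^ 3 / 6) * u⁻¹)))
    (eu := fun u => 2 * (exp (-(u ^ 3 / 10) * u⁻¹ ^ 2) / (2 * (u ^ 3 / 10) * u⁻¹) +
      sin 1 ^ (u ^ 3 - 3)))
    (by simpa using hε.neg.rexp) (by simpa using hε.rexp) ?_ ?_ ?_ ?_ ?_
  · simpa [mul_div_assoc] using
      (tendsto_gaussian_tail_div (k := 6) (by norm_num) hc.ne').const_mul 2
  · simpa [mul_div_assoc, add_div] using
      ((tendsto_gaussian_tail_div (k := 10) (by norm_num) hc.ne').add (tendsto_rpow_sub_div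
        (sin_pos_of_pos_of_lt_pi one_pos (by linarith [pi_gt_three])) (sin_lt one_pos)
        hc.ne')).const_mul 2
  all_goals
    filter_upwards [eventually_ge_atTop 2] with u hu
    have hu3 : 2 ^ 3 ≤ u ^ 3 := pow_le_pow_left₀ (by norm_num) hu 3
    have hn := Int.floor_le (u ^ 3)
    have hn1 := (Int.lt_floor_add_one (u ^ 3)).le
    have hδ : u⁻¹ ≤ 1 := inv_le_one_of_one_le₀ (by linarith)
  · exact ⟨by positivity, mul_le_rpow_mul_Gamma (by linarith) (by linarith) (by linarith) hc.le hcΓ⟩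
  · exact le_integral_abs_sin_rpow_div (by linarith) hn hn1 (by positivity) hδ
  · exact integral_abs_sin_rpow_div_le (by linarith) hn hn1 (by positivity) hδ
end
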